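/- arXiv:2403.07181 — 10 statements merged into one kernel-verified Lean document; each statement's English description precedes it below -/
import Mathlib

section
/- For any permutation σ ∈ S_n and any j ∈ [n−1], if j is a big descent of σ (i.e., σ(j) > σ(j+1) + 1), then j is a descent of εσ, where ε = s_2 s_4 ⋯ s_{2⌊n/2⌋} is the product of all even adjacent transpositions acting on values, i.e., (εσ)(i) = ε(σ(i)). -/
/-- The permutation `ε = s₂s₄⋯` acting on values: in 1-indexed terms it swaps `2i ↔ 2i+1`
for each `i` with `2i+1 ≤ n` and fixes everything else. Here it is written 0-indexed on
`Fin n`, so it swaps each odd `k` with `k+1` (when `k+1 < n`). -/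
def epsf (n : ℕ) (k : Fin n) : Fin n :=
  ⟨if k.val % 2 = 1 ∧ k.val + 1 < n then k.val + 1
   else if k.val % 2 = 0 ∧ k.val ≠ 0 then k.val - 1 else k.val, by
    split_ifs with h1 h2
    · exact h1.2
    · exact lt_of_le_of_lt (Nat.sub_le _ _) k.isLt
    · exact k.isLt⟩

/-- if `j` is a big descent of `σ` (i.e. `σ(j) > σ(j+1) + 1`), then `j` is a
descent of `εσ`, where `(εσ)(i) = ε(σ(i))`. -/
theorem bigDescent_to_descent_of_eps (n : ℕ) (σ : Equiv.Perm (Fin n)) (j : ℕ)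
    (h : j + 1 < n)
    (hbig : (σ ⟨j + 1, h⟩).val + 1 < (σ ⟨j, Nat.lt_of_succ_lt h⟩).val) :
    (epsf n (σ ⟨j + 1, h⟩)).val < (epsf n (σ ⟨j, Nat.lt_of_succ_lt h⟩)).val := by
  have ha := (σ ⟨j, Nat.lt_of_succ_lt h⟩).isLt
  have hb := (σ ⟨j + 1, h⟩).isLt
  simp only [epsf]
  split_ifs <;> omega
end

section
/- Let π be a linear extension of εZ_n (the naturally labeled zig-zag poset) and let π' = επ. Then the descent set of π equals the big-descent set of π': Des(π) = Des₁(π'). Consequently, the map π ↦ π⁻¹ε is a bijection from linear extensions of εZ_n to up-down alternating permutations which sends the descent set of π to the set of big returns of π⁻¹ε. -/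
/-- Cover relations of the zig-zag poset `Z_n` (0-indexed): `a` below `b` iff `a` is at an
even 0-indexed position and `b` is adjacent; in 1-indexed terms, `2i-1 < 2i > 2i+1`. -/
def ZigZagCover (n : ℕ) (a b : Fin n) : Prop :=
  a.val % 2 = 0 ∧ (b.val = a.val + 1 ∨ a.val = b.val + 1)

/-- `u` is an up-down alternating permutation: `u(1) < u(2) > u(3) < ⋯`. -/
def IsUpDownAlt {n : ℕ} (u : Equiv.Perm (Fin n)) : Prop :=
  ∀ (i : ℕ) (h : i + 1 < n),
    (i % 2 = 0 → u ⟨i, Nat.lt_of_succ_lt h⟩ < u ⟨i + 1, h⟩) ∧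
    (i % 2 = 1 → u ⟨i + 1, h⟩ < u ⟨i, Nat.lt_of_succ_lt h⟩)

theorem epsf_invol (n : ℕ) : Function.Involutive (epsf n) := by
  rintro ⟨v, hv⟩
  apply Fin.ext
  simp only [epsf]
  split_ifs <;> omega

def epsPerm (n : ℕ) : Equiv.Perm (Fin n) :=
  Function.Involutive.toPerm (epsf n) (epsf_invol n)

/-- The descent set `Des(w) = {i : w(i) > w(i+1)}` of a word `w` (0-indexed positions). -/
def desSetOf (n : ℕ) (w : Fin n → Fin n) : Set ℕ :=
  {i | ∃ h : i + 1 < n, w ⟨i + 1, h⟩ < w ⟨i, Nat.lt_of_succ_lt h⟩}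

/-- The big-descent set `Des₁(w) = {i : w(i) > w(i+1) + 1}`. -/
def bigDesSetOf (n : ℕ) (w : Fin n → Fin n) : Set ℕ :=
  {i | ∃ h : i + 1 < n, (w ⟨i + 1, h⟩).val + 1 < (w ⟨i, Nat.lt_of_succ_lt h⟩).val}

/-!
The involution `ε` moves every label by at most one, so a non-descent `π(j) < π(j+1)` cannot
become a big descent of `επ`. Conversely, if a descent `x = π(j) > π(j+1) = y` were not a big
descent of `επ`, then `εx ≤ εy + 1` while `ε` reverses the pair; this only happens when
`εy ⋖ εx` is a cover relation of `Z_n`, which forces `y` to precede `x` in `π`.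
The bijection is the observation that `τ⁻¹ε` is up-down alternating exactly when it is
order-preserving on the covers of `Z_n`, which says that `τ` is a linear extension of `εZ_n`.
-/

section EpsPerm

variable {n : ℕ}

theorem epsPerm_val (k : Fin n) : (epsPerm n k).val =
    if k.val % 2 = 1 ∧ k.val + 1 < n then k.val + 1
    else if k.val % 2 = 0 ∧ k.val ≠ 0 then k.val - 1 else k.val := rfl

theorem epsPerm_inv : (epsPerm n)⁻¹ = epsPerm n := rfl

theorem epsPerm_epsPerm (k : Fin n) : epsPerm n (epsPerm n k) = k := epsf_invol n k

theorem epsPerm_val_le_succ (k : Fin n) : (epsPerm n k).val ≤ k.val + 1 := by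
  rw [epsPerm_val]
  split_ifs <;> omega

theorem val_le_epsPerm_val_succ (k : Fin n) : k.val ≤ (epsPerm n k).val + 1 := by
  simpa only [epsPerm_epsPerm] using epsPerm_val_le_succ (epsPerm n k)

theorem epsPerm_val_le_succ_of_lt {x y : Fin n} (h : x < y) :
    (epsPerm n x).val ≤ (epsPerm n y).val + 1 :=
  calc (epsPerm n x).val ≤ x.val + 1 := epsPerm_val_le_succ x
    _ ≤ y.val := h
    _ ≤ (epsPerm n y).val + 1 := val_le_epsPerm_val_succ y

theorem zigZagCover_of_epsPerm_lt {a b : Fin n} (hlt : epsPerm n b < epsPerm n a)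
    (hle : a.val ≤ b.val + 1) : ZigZagCover n b a := by
  have ha := epsPerm_val a
  have hb := epsPerm_val b
  rw [Fin.lt_def] at hlt
  unfold ZigZagCover
  split_ifs at ha hb <;> omega

end EpsPerm

/-- `π` is a linear extension of the relabeled poset `εZ_n`. -/
def IsEpsZigZagLinearExtension (n : ℕ) (π : Equiv.Perm (Fin n)) : Prop :=
  ∀ a b : Fin n, ZigZagCover n a b → π⁻¹ (epsPerm n a) < π⁻¹ (epsPerm n b)

theorem IsEpsZigZagLinearExtension.lt_iff {n : ℕ} {π : Equiv.Perm (Fin n)}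
    (hπ : IsEpsZigZagLinearExtension n π) {x y : Fin n} (hxy : π⁻¹ x < π⁻¹ y) :
    y < x ↔ (epsPerm n y).val + 1 < (epsPerm n x).val := by
  constructor
  · intro hyx
    by_contra! hle
    have hcov := zigZagCover_of_epsPerm_lt (by simpa only [epsPerm_epsPerm] using hyx) hle
    have := hπ _ _ hcov
    simp only [epsPerm_epsPerm] at this
    exact lt_asymm hxy this
  · intro hbig
    by_contra! hle
    have hne : x ≠ y := fun h => (h ▸ hxy).false
    have := epsPerm_val_le_succ_of_lt (lt_of_le_of_ne hle hne)
    omega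

theorem IsEpsZigZagLinearExtension.succ_lt_iff {n : ℕ} {π : Equiv.Perm (Fin n)}
    (hπ : IsEpsZigZagLinearExtension n π) (j : ℕ) (h : j + 1 < n) :
    π ⟨j + 1, h⟩ < π ⟨j, Nat.lt_of_succ_lt h⟩ ↔
      (epsPerm n (π ⟨j + 1, h⟩)).val + 1 < (epsPerm n (π ⟨j, Nat.lt_of_succ_lt h⟩)).val :=
  hπ.lt_iff (by simp only [Equiv.Perm.coe_inv, Equiv.symm_apply_apply, Fin.mk_lt_mk, Nat.lt_succ_self])

theorem isUpDownAlt_iff_forall_zigZagCover {n : ℕ} {u : Equiv.Perm (Fin n)} :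
    IsUpDownAlt u ↔ ∀ a b : Fin n, ZigZagCover n a b → u a < u b := by
  constructor
  · rintro hu a b ⟨ha, hab | hab⟩
    · have := (hu a.val (hab ▸ b.isLt)).1 ha
      rwa [show (⟨a.val + 1, _⟩ : Fin n) = b from Fin.ext hab.symm] at this
    · have := (hu b.val (hab ▸ a.isLt)).2 (by omega)
      rwa [show (⟨b.val + 1, _⟩ : Fin n) = a from Fin.ext hab.symm] at this
  · intro hu i h
    exact ⟨fun hi => hu _ _ ⟨hi, Or.inl rfl⟩, fun hi => hu _ _ ⟨by simp only; omega, Or.inr rfl⟩⟩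

theorem bijOn_inv_mul_epsPerm (n : ℕ) :
    Set.BijOn (fun τ : Equiv.Perm (Fin n) => τ⁻¹ * epsPerm n)
      {τ | IsEpsZigZagLinearExtension n τ} {u | IsUpDownAlt u} := by
  have hbij : Function.Bijective fun τ : Equiv.Perm (Fin n) => τ⁻¹ * epsPerm n :=
    (Group.mulRight_bijective _).comp inv_involutive.bijective
  have hpre : {τ | IsEpsZigZagLinearExtension n τ} =
      (fun τ : Equiv.Perm (Fin n) => τ⁻¹ * epsPerm n) ⁻¹' {u | IsUpDownAlt u} :=
    Set.ext fun τ => (isUpDownAlt_iff_forall_zigZagCover (u := τ⁻¹ * epsPerm n)).symm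
  exact hpre ▸ hbij.bijOn_preimage

theorem desSetOf_eq_bigDesSetOf_epsPerm_mul {n : ℕ} {π : Equiv.Perm (Fin n)}
    (hπ : IsEpsZigZagLinearExtension n π) :
    desSetOf n π = bigDesSetOf n ⇑(epsPerm n * π) :=
  Set.ext fun i => exists_congr (hπ.succ_lt_iff i)

/-- if `π` is a linear extension of the naturally labeled zig-zag poset
`εZ_n`, then `Des(π) = Des₁(επ)`; consequently the map `τ ↦ τ⁻¹ε` is a bijection from
linear extensions of `εZ_n` onto up-down alternating permutations, and it sends the
descent set of `π` to the set of big returns of `π⁻¹ε` (i.e. `Des₁((π⁻¹ε)⁻¹)`). -/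
theorem des_eq_bigDes_eps_and_bijection (n : ℕ) (π : Equiv.Perm (Fin n))
    (hlin : ∀ a b : Fin n, ZigZagCover n a b →
      π⁻¹ (epsPerm n a) < π⁻¹ (epsPerm n b)) :
    (∀ (j : ℕ) (h : j + 1 < n),
        (π ⟨j + 1, h⟩ < π ⟨j, Nat.lt_of_succ_lt h⟩) ↔
          (epsPerm n (π ⟨j + 1, h⟩)).val + 1 < (epsPerm n (π ⟨j, Nat.lt_of_succ_lt h⟩)).val) ∧
    Set.BijOn (fun τ : Equiv.Perm (Fin n) => τ⁻¹ * epsPerm n)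
      {τ : Equiv.Perm (Fin n) | ∀ a b : Fin n, ZigZagCover n a b →
        τ⁻¹ (epsPerm n a) < τ⁻¹ (epsPerm n b)}
      {u : Equiv.Perm (Fin n) | IsUpDownAlt u} ∧
    desSetOf n ⇑π = bigDesSetOf n ⇑((π⁻¹ * epsPerm n)⁻¹) := by
  have hπ : IsEpsZigZagLinearExtension n π := hlin
  refine ⟨hπ.succ_lt_iff, bijOn_inv_mul_epsPerm n, ?_⟩
  rw [mul_inv_rev, inv_inv, epsPerm_inv]
  exact desSetOf_eq_bigDesSetOf_epsPerm_mul hπ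
end

section
/- For a permutation π ∈ S_n with d big descents (indices i with π(i) > π(i+1)+1), the number of relaxed π-partitions bounded by m equals the binomial coefficient C(m + n − 1 − d, n). -/
private lemma chain_strictMono {n : ℕ} {α : Type*} [Preorder α] {f : Fin n → α}
    (h : ∀ i (hi : i + 1 < n), f ⟨i, Nat.lt_of_succ_lt hi⟩ < f ⟨i + 1, hi⟩) :
    StrictMono f := by
  have key : ∀ b (hb : b < n), ∀ a, ∀ ha : a < b, f ⟨a, by omega⟩ < f ⟨b, hb⟩ := by
    intro b
    induction b with
    | zero => intro _ a ha; omega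
    | succ b ih =>
      intro hb a ha
      rcases eq_or_lt_of_le (Nat.lt_succ_iff.mp ha) with rfl | h'
      · exact h a hb
      · exact (ih (by omega) a h').trans (h b hb)
  intro i j hij
  have := key j.val j.isLt i.val hij
  simpa using this

private lemma strictMono_le' {n M : ℕ} {f : Fin n → Fin M} (hf : StrictMono f) :
    ∀ b (hb : b < n), ∀ a (ha : a < n), a ≤ b →
      (f ⟨a, ha⟩).val + (b - a) ≤ (f ⟨b, hb⟩).val := by
  intro b
  induction b with
  | zero =>
    intro hb a ha hab
    have : a = 0 := by omega
    subst this; simp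
  | succ b ih =>
    intro hb a ha hab
    rcases eq_or_lt_of_le hab with rfl | h'
    · simp
    · have h1 := ih (by omega) a ha (by omega)
      have h2 : f ⟨b, by omega⟩ < f ⟨b + 1, hb⟩ := hf (by simp [Fin.lt_def])
      rw [Fin.lt_def] at h2
      omega

open Classical in
/-- The big-descent set as a `Finset`. -/
private noncomputable def BDes (n : ℕ) (π : Equiv.Perm (Fin n)) : Finset ℕ :=
  (Finset.range (n - 1)).filter
    (fun i => ∃ h : i + 1 < n,
      (π ⟨i + 1, h⟩).val + 1 < (π ⟨i, Nat.lt_of_succ_lt h⟩).val)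

private lemma coe_BDes (n : ℕ) (π : Equiv.Perm (Fin n)) :
    (BDes n π : Set ℕ) = bigDesSetOf n ⇑π := by
  ext i
  simp only [BDes, bigDesSetOf, Set.mem_setOf_eq, Finset.coe_filter, Finset.mem_range]
  constructor
  · rintro ⟨_, h, hlt⟩; exact ⟨h, hlt⟩
  · rintro ⟨h, hlt⟩; exact ⟨by omega, h, hlt⟩

private lemma mem_BDes {n : ℕ} {π : Equiv.Perm (Fin n)} {i : ℕ} (h : i + 1 < n) :
    i ∈ BDes n π ↔ (π ⟨i + 1, h⟩).val + 1 < (π ⟨i, Nat.lt_of_succ_lt h⟩).val := by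
  simp only [BDes, Finset.mem_filter, Finset.mem_range]
  constructor
  · rintro ⟨_, _, hlt⟩; exact hlt
  · intro hlt; exact ⟨by omega, h, hlt⟩

private lemma BDes_card_le (n : ℕ) (π : Equiv.Perm (Fin n)) :
    (BDes n π).card ≤ n - 1 := by
  calc (BDes n π).card ≤ (Finset.range (n - 1)).card :=
        Finset.card_le_card (Finset.filter_subset _ _)
  _ = n - 1 := Finset.card_range _

/-- Number of big descents below `i`. -/
private noncomputable def cnt (n : ℕ) (π : Equiv.Perm (Fin n)) (i : ℕ) : ℕ :=
  (BDes n π ∩ Finset.range i).card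

private lemma cnt_le (n : ℕ) (π : Equiv.Perm (Fin n)) (i : ℕ) : cnt n π i ≤ i :=
  le_trans (Finset.card_le_card Finset.inter_subset_right) (Finset.card_range i).le

private lemma cnt_le_card (n : ℕ) (π : Equiv.Perm (Fin n)) (i : ℕ) :
    cnt n π i ≤ (BDes n π).card :=
  Finset.card_le_card Finset.inter_subset_left

private lemma cnt_ge (n : ℕ) (π : Equiv.Perm (Fin n)) (i : ℕ) :
    (BDes n π).card ≤ cnt n π i + (n - 1 - i) := by
  have h1 : (BDes n π \ Finset.range i).card + (BDes n π ∩ Finset.range i).card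
      = (BDes n π).card :=
    Finset.card_sdiff_add_card_inter _ _
  have h2 : (BDes n π \ Finset.range i).card ≤ (Finset.Ico i (n - 1)).card := by
    apply Finset.card_le_card
    intro x hx
    obtain ⟨hxB, hxr⟩ := Finset.mem_sdiff.mp hx
    have hxlt : x < n - 1 := Finset.mem_range.mp (Finset.mem_filter.mp hxB).1
    simp only [Finset.mem_range, not_lt] at hxr
    exact Finset.mem_Ico.mpr ⟨hxr, hxlt⟩
  rw [Nat.card_Ico] at h2
  have hci : cnt n π i = (BDes n π ∩ Finset.range i).card := rfl
  omega

private lemma cnt_succ (n : ℕ) (π : Equiv.Perm (Fin n)) (i : ℕ) :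
    cnt n π (i + 1) = cnt n π i + (if i ∈ BDes n π then 1 else 0) := by
  classical
  by_cases hiB : i ∈ BDes n π
  · rw [if_pos hiB]
    have heq : BDes n π ∩ Finset.range (i + 1) = insert i (BDes n π ∩ Finset.range i) := by
      ext x
      simp only [Finset.mem_inter, Finset.mem_range, Finset.mem_insert]
      constructor
      · rintro ⟨hxB, hxr⟩
        rcases Nat.lt_succ_iff_lt_or_eq.mp hxr with h' | rfl
        · exact Or.inr ⟨hxB, h'⟩
        · exact Or.inl rfl
      · rintro (rfl | ⟨hxB, hxr⟩)
        · exact ⟨hiB, Nat.lt_succ_self _⟩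
        · exact ⟨hxB, by omega⟩
    show (BDes n π ∩ Finset.range (i + 1)).card = (BDes n π ∩ Finset.range i).card + 1
    rw [heq, Finset.card_insert_of_notMem (by simp)]
  · rw [if_neg hiB]
    have heq : BDes n π ∩ Finset.range (i + 1) = BDes n π ∩ Finset.range i := by
      ext x
      simp only [Finset.mem_inter, Finset.mem_range]
      constructor
      · rintro ⟨hxB, hxr⟩
        refine ⟨hxB, ?_⟩
        rcases Nat.lt_succ_iff_lt_or_eq.mp hxr with h' | rfl
        · exact h'
        · exact absurd hxB hiB
      · rintro ⟨hxB, hxr⟩; exact ⟨hxB, by omega⟩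
    show (BDes n π ∩ Finset.range (i + 1)).card = (BDes n π ∩ Finset.range i).card + 0
    rw [heq, Nat.add_zero]

/-- The relaxed partition condition. -/
private def RCond (n m : ℕ) (π : Equiv.Perm (Fin n)) (g : Fin n → Fin m) : Prop :=
  ∀ (i : ℕ) (h : i + 1 < n),
    g (π ⟨i, Nat.lt_of_succ_lt h⟩) ≤ g (π ⟨i + 1, h⟩) ∧
    ((π ⟨i + 1, h⟩).val + 1 < (π ⟨i, Nat.lt_of_succ_lt h⟩).val →
      g (π ⟨i, Nat.lt_of_succ_lt h⟩) < g (π ⟨i + 1, h⟩))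

/-- Forward map: from relaxed partitions to strictly monotone functions. -/
private noncomputable def fwd (n m : ℕ) (π : Equiv.Perm (Fin n)) (g : Fin n → Fin m)
    (i : Fin n) : Fin (m + n - 1 - (BDes n π).card) :=
  ⟨(g (π i)).val + i.val - cnt n π i.val, by
    have h1 : (g (π i)).val < m := (g (π i)).isLt
    have h2 := cnt_le n π i.val
    have h3 := cnt_le_card n π i.val
    have h4 := cnt_ge n π i.val
    have h5 := i.isLt
    omega⟩

private lemma fwd_strictMono {n m : ℕ} {π : Equiv.Perm (Fin n)} {g : Fin n → Fin m}
    (hg : RCond n m π g) : StrictMono (fwd n m π g) := by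
  apply chain_strictMono
  intro i hi
  have hcond := hg i hi
  simp only [fwd, Fin.mk_lt_mk]
  have hsucc := cnt_succ n π i
  have h2 := cnt_le n π i
  by_cases hiB : i ∈ BDes n π
  · rw [if_pos hiB] at hsucc
    have hstrict := hcond.2 ((mem_BDes hi).mp hiB)
    rw [Fin.lt_def] at hstrict
    omega
  · rw [if_neg hiB] at hsucc
    have hle := hcond.1
    rw [Fin.le_def] at hle
    omega

/-- Inverse map: from strictly monotone functions to relaxed partitions. -/
private noncomputable def inv (n m : ℕ) (π : Equiv.Perm (Fin n))
    (f : Fin n → Fin (m + n - 1 - (BDes n π).card)) (hf : StrictMono f)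
    (x : Fin n) : Fin m :=
  ⟨(f (π.symm x)).val + cnt n π (π.symm x).val - (π.symm x).val, by
    set j : Fin n := π.symm x with hj
    have hjn : j.val < n := j.isLt
    have hn : 0 < n := j.pos
    have hlow : (f ⟨0, hn⟩).val + (j.val - 0) ≤ (f ⟨j.val, hjn⟩).val :=
      strictMono_le' hf j.val hjn 0 hn (by omega)
    have hhigh : (f ⟨j.val, hjn⟩).val + (n - 1 - j.val) ≤ (f ⟨n - 1, by omega⟩).val :=
      strictMono_le' hf (n - 1) (by omega) j.val hjn (by omega)
    have htop : (f ⟨n - 1, by omega⟩).val < m + n - 1 - (BDes n π).card :=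
      (f ⟨n - 1, by omega⟩).isLt
    have h2 := cnt_le n π j.val
    have h3 := cnt_le_card n π j.val
    have h4 := cnt_ge n π j.val
    have : f ⟨j.val, hjn⟩ = f j := by congr 1
    rw [this] at hlow hhigh
    omega⟩

private lemma inv_mem {n m : ℕ} {π : Equiv.Perm (Fin n)}
    {f : Fin n → Fin (m + n - 1 - (BDes n π).card)} (hf : StrictMono f) :
    RCond n m π (inv n m π f hf) := by
  intro i h
  simp only [inv, Equiv.symm_apply_apply]
  have hlt : f ⟨i, Nat.lt_of_succ_lt h⟩ < f ⟨i + 1, h⟩ := hf (by simp [Fin.lt_def])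
  rw [Fin.lt_def] at hlt
  have hn : 0 < n := by omega
  have hlow : (f ⟨0, hn⟩).val + (i - 0) ≤ (f ⟨i, Nat.lt_of_succ_lt h⟩).val :=
    strictMono_le' hf i (Nat.lt_of_succ_lt h) 0 hn (by omega)
  have hsucc := cnt_succ n π i
  have h2 := cnt_le n π i
  constructor
  · rw [Fin.le_def]
    simp only [Fin.mk_le_mk]
    by_cases hiB : i ∈ BDes n π
    · rw [if_pos hiB] at hsucc; omega
    · rw [if_neg hiB] at hsucc; omega
  · intro hbig
    have hiB : i ∈ BDes n π := (mem_BDes h).mpr hbig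
    rw [if_pos hiB] at hsucc
    rw [Fin.lt_def]
    simp only [Fin.mk_lt_mk]
    omega

private lemma inv_fwd {n m : ℕ} {π : Equiv.Perm (Fin n)} {g : Fin n → Fin m}
    (hg : StrictMono (fwd n m π g)) :
    inv n m π (fwd n m π g) hg = g := by
  funext x
  apply Fin.ext
  simp only [inv, fwd, Equiv.apply_symm_apply]
  have h2 := cnt_le n π (π.symm x).val
  have h1 : (g x).val < m := (g x).isLt
  omega

private lemma fwd_inv {n m : ℕ} {π : Equiv.Perm (Fin n)}
    {f : Fin n → Fin (m + n - 1 - (BDes n π).card)} (hf : StrictMono f) :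
    fwd n m π (inv n m π f hf) = f := by
  funext i
  apply Fin.ext
  simp only [fwd, inv, Equiv.symm_apply_apply]
  have hn : 0 < n := i.pos
  have hlow : (f ⟨0, hn⟩).val + (i.val - 0) ≤ (f ⟨i.val, i.isLt⟩).val :=
    strictMono_le' hf i.val i.isLt 0 hn (by omega)
  have : f ⟨i.val, i.isLt⟩ = f i := by congr 1
  rw [this] at hlow
  have h2 := cnt_le n π i.val
  omega

/-- Equivalence between relaxed partitions and strictly monotone functions. -/
private noncomputable def relaxedEquiv (n m : ℕ) (π : Equiv.Perm (Fin n)) :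
    {g : Fin n → Fin m // RCond n m π g} ≃
      {f : Fin n → Fin (m + n - 1 - (BDes n π).card) // StrictMono f} where
  toFun g := ⟨fwd n m π g.1, fwd_strictMono g.2⟩
  invFun f := ⟨inv n m π f.1 f.2, inv_mem f.2⟩
  left_inv g := Subtype.ext (inv_fwd (fwd_strictMono g.2))
  right_inv f := Subtype.ext (fwd_inv f.2)

/-- Equivalence between strictly monotone functions and `n`-subsets. -/
private noncomputable def smEquiv (n M : ℕ) :
    {f : Fin n → Fin M // StrictMono f} ≃ {s : Finset (Fin M) // s.card = n} where
  toFun f := ⟨Finset.univ.image f.1, by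
    rw [Finset.card_image_of_injective _ f.2.injective, Finset.card_univ,
      Fintype.card_fin]⟩
  invFun s := ⟨s.1.orderEmbOfFin s.2, (s.1.orderEmbOfFin s.2).strictMono⟩
  left_inv f := Subtype.ext (Finset.orderEmbOfFin_unique _
    (fun x => Finset.mem_image_of_mem _ (Finset.mem_univ x)) f.2).symm
  right_inv s := Subtype.ext (by
    apply Finset.coe_injective
    rw [Finset.coe_image, Finset.coe_univ, Set.image_univ,
      Finset.range_orderEmbOfFin])

/-- for `π ∈ S_n` with `d` big descents, the number of relaxed
`π`-partitions bounded by `m` (weakly increasing along the chain of `π`, with values in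
`{1,…,m}`, strict at each big descent) equals `C(m + n - 1 - d, n)`. -/
theorem card_relaxed_chain_partitions (n m : ℕ) (π : Equiv.Perm (Fin n)) :
    Set.ncard {g : Fin n → Fin m | ∀ (i : ℕ) (h : i + 1 < n),
        g (π ⟨i, Nat.lt_of_succ_lt h⟩) ≤ g (π ⟨i + 1, h⟩) ∧
        ((π ⟨i + 1, h⟩).val + 1 < (π ⟨i, Nat.lt_of_succ_lt h⟩).val →
          g (π ⟨i, Nat.lt_of_succ_lt h⟩) < g (π ⟨i + 1, h⟩))} =
      Nat.choose (m + n - 1 - (bigDesSetOf n ⇑π).ncard) n := by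
  have hset : {g : Fin n → Fin m | ∀ (i : ℕ) (h : i + 1 < n),
      g (π ⟨i, Nat.lt_of_succ_lt h⟩) ≤ g (π ⟨i + 1, h⟩) ∧
      ((π ⟨i + 1, h⟩).val + 1 < (π ⟨i, Nat.lt_of_succ_lt h⟩).val →
        g (π ⟨i, Nat.lt_of_succ_lt h⟩) < g (π ⟨i + 1, h⟩))}
      = {g : Fin n → Fin m | RCond n m π g} := rfl
  have hd : (bigDesSetOf n ⇑π).ncard = (BDes n π).card := by
    rw [← coe_BDes, Set.ncard_coe_finset]
  rw [hset, hd, ← Nat.card_coe_set_eq]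
  have : Nat.card {g : Fin n → Fin m | RCond n m π g}
      = Nat.card {f : Fin n → Fin (m + n - 1 - (BDes n π).card) // StrictMono f} :=
    Nat.card_congr (relaxedEquiv n m π)
  rw [this, Nat.card_congr (smEquiv n (m + n - 1 - (BDes n π).card)),
    Nat.card_eq_fintype_card, Fintype.card_finset_len, Fintype.card_fin]
end

section
/- Let Ω_n(m) denote the number of sequences (a_1,…,a_n) ∈ {1,…,m}^n with a_1 ≤ a_2 ≥ a_3 ≤ a_4 ≥ ⋯, with Ω_0(m) = 1. Then for all n ≥ 2 and m ≥ 1: Ω_n(m) = Ω_n(m−1) + Ω_{n−2}(m) + Σ_{0 ≤ j ≤ (n−2)/2} Ω_{2j+1}(m−1)·Ω_{n−2−2j}(m), where Ω_n(0) = 0 for n ≥ 1 and Ω_0(0)=1. -/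
/-- `f : [n] → {1,…,m}` is a zig-zag sequence: `f(1) ≤ f(2) ≥ f(3) ≤ f(4) ≥ ⋯`. -/
def IsZigZagSeq {n m : ℕ} (f : Fin n → Fin m) : Prop :=
  ∀ (i : ℕ) (h : i + 1 < n),
    (i % 2 = 0 → f ⟨i, Nat.lt_of_succ_lt h⟩ ≤ f ⟨i + 1, h⟩) ∧
    (i % 2 = 1 → f ⟨i + 1, h⟩ ≤ f ⟨i, Nat.lt_of_succ_lt h⟩)

/-- The zig-zag order polynomial `Ω_n(m)`: the number of zig-zag sequences of length `n`
with entries in `{1,…,m}`. In particular `Ω_0(m) = 1` and `Ω_n(0) = 0` for `n ≥ 1`. -/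
noncomputable def zzOmega (n m : ℕ) : ℕ :=
  Set.ncard {f : Fin n → Fin m | IsZigZagSeq f}

/-!
Split a zig-zag sequence with entries in `{1,…,m}` at the first occurrence of the top value `m`.
If `m` does not occur, the sequence is one of the `Ω_n(m-1)` sequences with entries below `m`.
The first `m` cannot be a valley `a_{2k+1}` with `k ≥ 1`, since the peak `a_{2k}` before it would
also equal `m`. If `a_1 = m` then `a_2 = m`, and `a_3, …, a_n` is an arbitrary zig-zag sequence.
If the first `m` is the peak `a_{2j+2}`, it dominates both neighbours, so the sequence is any
zig-zag sequence of length `2j+1` with entries below `m`, then `m`, then any zig-zag sequence of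
length `n-2-2j`.
-/

open Finset

theorem isZigZagSeq_comp_iff {n m m' : ℕ} {e : Fin m → Fin m'} (he : StrictMono e)
    {g : Fin n → Fin m} : IsZigZagSeq (e ∘ g) ↔ IsZigZagSeq g := by
  simp only [IsZigZagSeq, Function.comp_apply, he.le_iff_le]

theorem isZigZagSeq_append_cons {m a b : ℕ} (ha : Even a) (u : Fin (a + 1) → Fin m) (x : Fin m)
    (v : Fin b → Fin m) :
    IsZigZagSeq (Fin.append u (Fin.cons x v)) ↔
      IsZigZagSeq u ∧ u (Fin.last a) ≤ x ∧ (∀ h : 0 < b, v ⟨0, h⟩ ≤ x) ∧ IsZigZagSeq v := by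
  set F := Fin.append u (Fin.cons x v)
  have hu (i : ℕ) (hi : i < a + 1) (h) : F ⟨i, h⟩ = u ⟨i, hi⟩ := Fin.append_left u _ ⟨i, hi⟩
  have hx (i : ℕ) (hi : i = a + 1) (h) : F ⟨i, h⟩ = x := by
    subst hi
    exact Fin.append_right u (Fin.cons x v) 0
  have hv (i j : ℕ) (hj : j < b) (hij : i = a + 2 + j) (h) : F ⟨i, h⟩ = v ⟨j, hj⟩ := by
    subst hij
    exact (congrArg F (Fin.ext (by simp only [Fin.val_natAdd, Fin.val_succ]; omega))).trans
      ((Fin.append_right u (Fin.cons x v) (Fin.succ ⟨j, hj⟩)).trans (Fin.cons_succ _ _ _))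
  rw [Nat.even_iff] at ha
  constructor
  · intro hF
    refine ⟨fun i h => ?_, ?_, fun h => ?_, fun j h => ?_⟩
    · rw [← hu i _ (by omega), ← hu (i + 1) h (by omega)]
      exact hF i (by omega)
    · have := (hF a (by omega)).1 ha
      rwa [hu a (by omega), hx (a + 1) rfl] at this
    · rw [← hx (a + 1) rfl (by omega), ← hv (a + 2) 0 h rfl (by omega)]
      exact (hF (a + 1) (by omega)).2 (by omega)
    · rw [← hv (a + 2 + j) j (by omega) rfl (by omega),
        ← hv (a + 2 + j + 1) (j + 1) h (by omega) (by omega)]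
      have := hF (a + 2 + j) (by omega)
      exact ⟨fun hj => this.1 (by omega), fun hj => this.2 (by omega)⟩
  · rintro ⟨hzu, hux, hvx, hzv⟩ i h
    rcases (by omega : i + 1 < a + 1 ∨ a = i ∨ a + 1 = i ∨ a + 2 ≤ i) with hi | rfl | rfl | hi
    · rw [hu i (by omega), hu (i + 1) hi]
      exact hzu i hi
    · rw [hu a (by omega), hx (a + 1) rfl h]
      exact ⟨fun _ => hux, by omega⟩
    · rw [hx (a + 1) rfl, hv (a + 1 + 1) 0 (by omega) (by omega) h]
      exact ⟨by omega, fun _ => hvx _⟩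
    · rw [hv i (i - (a + 2)) (by omega) (by omega),
        hv (i + 1) (i - (a + 2) + 1) (by omega) (by omega) h]
      have := hzv (i - (a + 2)) (by omega)
      exact ⟨fun hi => this.1 (by omega), fun hi => this.2 (by omega)⟩

theorem isZigZagSeq_append_cons_last {m a b : ℕ} (ha : Even a) (u : Fin (a + 1) → Fin (m + 1))
    (v : Fin b → Fin (m + 1)) :
    IsZigZagSeq (Fin.append u (Fin.cons (Fin.last m) v)) ↔ IsZigZagSeq u ∧ IsZigZagSeq v := by
  simp [isZigZagSeq_append_cons ha, Fin.le_last]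

theorem Fin.append_castAdd_cons_natAdd {α : Type*} {p q : ℕ} (f : Fin (p + (q + 1)) → α) :
    Fin.append (fun i => f (Fin.castAdd _ i))
      (Fin.cons (f (Fin.natAdd p 0)) fun i => f (Fin.natAdd p i.succ)) = f := by
  conv_rhs => rw [← Fin.append_castAdd_natAdd (f := f)]
  exact congrArg _ (Fin.cons_self_tail fun i => f (Fin.natAdd p i))

theorem Fin.append_injective2 {α : Type*} {p q : ℕ} :
    Function.Injective2 (Fin.append : (Fin p → α) → (Fin q → α) → Fin (p + q) → α) :=
  fun u u' v v' h =>
    Prod.ext_iff.1 ((Fin.appendEquiv p q).injective (a₁ := (u, v)) (a₂ := (u', v')) h)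

open Classical in
noncomputable def zigzags (n m : ℕ) : Finset (Fin n → Fin m) := {f | IsZigZagSeq f}

@[simp]
theorem mem_zigzags {n m : ℕ} {f : Fin n → Fin m} : f ∈ zigzags n m ↔ IsZigZagSeq f := by
  simp [zigzags]

theorem zzOmega_eq_card_zigzags (n m : ℕ) : zzOmega n m = #(zigzags n m) := by
  rw [zzOmega, ← Set.ncard_coe_finset]
  congr
  ext
  simp

noncomputable def firstTop {n m : ℕ} (f : Fin n → Fin (m + 1)) : ℕ :=
  if h : ∃ i, f i = Fin.last m then Fin.find _ h else n

section firstTop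

variable {n m : ℕ} {f : Fin n → Fin (m + 1)}

theorem firstTop_eq_length_iff : firstTop f = n ↔ ∀ i, f i ≠ Fin.last m := by
  unfold firstTop
  split_ifs with h
  · obtain ⟨i, hi⟩ := h
    exact iff_of_false (Fin.find _ _).isLt.ne fun hne => hne i hi
  · simpa using h

theorem firstTop_le_length : firstTop f ≤ n := by
  unfold firstTop
  split_ifs with h
  · exact (Fin.find _ h).isLt.le
  · exact le_rfl

theorem firstTop_eq_val_iff (i : Fin n) :
    firstTop f = i ↔ f i = Fin.last m ∧ ∀ j < i, f j ≠ Fin.last m := by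
  unfold firstTop
  split_ifs with h
  · rw [← Fin.find_eq_iff h, Fin.val_eq_val]
  · push Not at h
    simp [h i, i.isLt.ne']

theorem firstTop_eq_zero_or_odd (hf : IsZigZagSeq f) (h : firstTop f < n) :
    firstTop f = 0 ∨ Odd (firstTop f) := by
  set k := firstTop f with hk
  obtain ⟨hlast, hmin⟩ := (firstTop_eq_val_iff ⟨k, h⟩).1 hk.symm
  rcases Nat.even_or_odd k with ⟨j, hj⟩ | hodd
  · refine (Nat.eq_zero_or_pos k).imp_right fun hpos => absurd ?_ (hmin ⟨k - 1, by omega⟩ ?_)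
    · have step := (hf (k - 1) (by omega)).2 (by omega)
      simp only [show k - 1 + 1 = k by omega, hlast] at step
      exact le_antisymm (Fin.le_last _) step
    · simp only [Fin.lt_def]
      omega
  · exact Or.inr hodd

end firstTop

section fibers

variable {m : ℕ}

theorem firstTop_eq_natAdd_zero_iff {p q : ℕ} {f : Fin (p + (q + 1)) → Fin (m + 1)} :
    firstTop f = p ↔ f (Fin.natAdd p 0) = Fin.last m ∧ ∀ i, f (Fin.castAdd _ i) ≠ Fin.last m := by
  refine (firstTop_eq_val_iff (Fin.natAdd p (0 : Fin (q + 1)))).trans <|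
    and_congr_right fun _ => ⟨fun h i => h _ (by simp [Fin.lt_def]), fun h j hj => ?_⟩
  induction j using Fin.addCases with
  | left i => exact h i
  | right i => simp [Fin.lt_def] at hj

theorem filter_zigzags_firstTop_eq_length (n : ℕ) :
    {f ∈ zigzags n (m + 1) | firstTop f = n} = (zigzags n m).image (Fin.castSucc ∘ ·) := by
  ext f
  simp only [mem_filter, mem_image, mem_zigzags, firstTop_eq_length_iff]
  constructor
  · rintro ⟨hf, hne⟩
    have hf_eq : f = Fin.castSucc ∘ fun i => (f i).castPred (hne i) :=
      funext fun i => (Fin.castSucc_castPred _ _).symm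
    rw [hf_eq, isZigZagSeq_comp_iff Fin.strictMono_castSucc] at hf
    exact ⟨_, hf, hf_eq.symm⟩
  · rintro ⟨g, hg, rfl⟩
    exact ⟨(isZigZagSeq_comp_iff Fin.strictMono_castSucc).2 hg, fun i => Fin.castSucc_ne_last _⟩

theorem filter_zigzags_firstTop_eq_of_even {a : ℕ} (ha : Even a) (b : ℕ) :
    {f ∈ zigzags (a + 1 + (b + 1)) (m + 1) | firstTop f = a + 1} =
      (zigzags (a + 1) m ×ˢ zigzags b (m + 1)).image
        fun p => Fin.append (Fin.castSucc ∘ p.1) (Fin.cons (Fin.last m) p.2) := by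
  ext f
  simp only [mem_filter, mem_image, mem_product, mem_zigzags, Prod.exists,
    firstTop_eq_natAdd_zero_iff]
  constructor
  · rintro ⟨hf, hlast, hne⟩
    have hf_eq : f = Fin.append (Fin.castSucc ∘ fun i => (f (Fin.castAdd _ i)).castPred (hne i))
        (Fin.cons (Fin.last m) fun i => f (Fin.natAdd _ i.succ)) := by
      simp only [Function.comp_def, Fin.castSucc_castPred, ← hlast]
      exact (Fin.append_castAdd_cons_natAdd f).symm
    rw [hf_eq, isZigZagSeq_append_cons_last ha,
      isZigZagSeq_comp_iff Fin.strictMono_castSucc] at hf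
    exact ⟨_, _, hf, hf_eq.symm⟩
  · rintro ⟨g, h, ⟨hg, hh⟩, rfl⟩
    refine ⟨(isZigZagSeq_append_cons_last ha _ _).2
      ⟨(isZigZagSeq_comp_iff Fin.strictMono_castSucc).2 hg, hh⟩, by simp, fun i => ?_⟩
    simp [Fin.castSucc_ne_last]

theorem filter_zigzags_firstTop_eq_zero (b : ℕ) :
    {f ∈ zigzags (0 + 1 + (b + 1)) (m + 1) | firstTop f = 0} =
      (zigzags b (m + 1)).image
        fun h => Fin.append (fun _ => Fin.last m) (Fin.cons (Fin.last m) h) := by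
  have hconst : IsZigZagSeq fun _ : Fin (0 + 1) => Fin.last m := fun i h => absurd h (by omega)
  ext f
  have htop : firstTop f = 0 ↔ _ := firstTop_eq_val_iff (Fin.castAdd (b + 1) (0 : Fin (0 + 1)))
  simp only [mem_filter, mem_image, mem_zigzags, htop]
  constructor
  · rintro ⟨hf, hfirst, -⟩
    have hsecond : f (Fin.natAdd _ 0) = Fin.last m :=
      le_antisymm (Fin.le_last _) (hfirst ▸ (hf 0 (by omega)).1 rfl)
    have hf_eq : f = Fin.append (fun _ => Fin.last m)
        (Fin.cons (Fin.last m) fun i => f (Fin.natAdd _ i.succ)) := by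
      conv_lhs => rw [← Fin.append_castAdd_cons_natAdd f, hsecond]
      congr 1
      funext i
      rwa [Subsingleton.elim (α := Fin 1) i 0]
    rw [hf_eq, isZigZagSeq_append_cons_last Even.zero] at hf
    exact ⟨_, hf.2, hf_eq.symm⟩
  · rintro ⟨h, hh, rfl⟩
    refine ⟨(isZigZagSeq_append_cons_last Even.zero _ _).2 ⟨hconst, hh⟩, by simp, fun j hj => ?_⟩
    simp [Fin.lt_def] at hj

theorem card_filter_zigzags_firstTop_eq_length (n : ℕ) :
    #{f ∈ zigzags n (m + 1) | firstTop f = n} = zzOmega n m := by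
  rw [filter_zigzags_firstTop_eq_length,
    card_image_of_injective _ (Fin.castSucc_injective _).comp_left, zzOmega_eq_card_zigzags]

theorem card_filter_zigzags_firstTop_eq_zero {N : ℕ} (hN : 2 ≤ N) :
    #{f ∈ zigzags N (m + 1) | firstTop f = 0} = zzOmega (N - 2) (m + 1) := by
  obtain ⟨b, rfl⟩ : ∃ b, N = 0 + 1 + (b + 1) := ⟨N - 2, by omega⟩
  have hinj : Function.Injective fun h : Fin b → Fin (m + 1) =>
      Fin.append (fun _ : Fin (0 + 1) => Fin.last m) (Fin.cons (Fin.last m) h) := fun h h' e =>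
    Fin.cons_right_injective _ (Fin.append_injective2 e).2
  rw [filter_zigzags_firstTop_eq_zero, card_image_of_injective _ hinj, zzOmega_eq_card_zigzags,
    show 0 + 1 + (b + 1) - 2 = b by omega]

theorem card_filter_zigzags_firstTop_eq_of_even {N a : ℕ} (ha : Even a) (hN : a + 1 < N) :
    #{f ∈ zigzags N (m + 1) | firstTop f = a + 1} =
      zzOmega (a + 1) m * zzOmega (N - (a + 2)) (m + 1) := by
  obtain ⟨b, rfl⟩ : ∃ b, N = a + 1 + (b + 1) := ⟨N - (a + 2), by omega⟩
  have hinj : Function.Injective fun p : (Fin (a + 1) → Fin m) × (Fin b → Fin (m + 1)) =>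
      Fin.append (Fin.castSucc ∘ p.1) (Fin.cons (Fin.last m) p.2) := by
    rintro ⟨g, h⟩ ⟨g', h'⟩ e
    obtain ⟨e₁, e₂⟩ := Fin.append_injective2 e
    exact Prod.ext ((Fin.castSucc_injective _).comp_left e₁) (Fin.cons_right_injective _ e₂)
  rw [filter_zigzags_firstTop_eq_of_even ha, card_image_of_injective _ hinj, card_product,
    zzOmega_eq_card_zigzags, zzOmega_eq_card_zigzags, show a + 1 + (b + 1) - (a + 2) = b by omega]

end fibers

/-- for `n ≥ 2` and `m ≥ 1`,
`Ω_n(m) = Ω_n(m-1) + Ω_{n-2}(m) + Σ_{0 ≤ j ≤ (n-2)/2} Ω_{2j+1}(m-1)·Ω_{n-2-2j}(m)`. -/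
theorem zzOmega_rec_one (n m : ℕ) (hn : 2 ≤ n) (hm : 1 ≤ m) :
    zzOmega n m = zzOmega n (m - 1) + zzOmega (n - 2) m +
      ∑ j ∈ Finset.range ((n - 2) / 2 + 1),
        zzOmega (2 * j + 1) (m - 1) * zzOmega (n - 2 - 2 * j) m := by
  obtain ⟨n, rfl⟩ : ∃ k, n = k + 2 := ⟨n - 2, by omega⟩
  obtain ⟨m, rfl⟩ : ∃ k, m = k + 1 := ⟨m - 1, by omega⟩
  simp only [Nat.add_sub_cancel]
  set odds := (range (n / 2 + 1)).image fun j => 2 * j + 1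
  have hlength_notMem : n + 2 ∉ insert 0 odds := by
    simp only [mem_insert, odds, mem_image, mem_range]
    rintro (h | ⟨j, hj, h⟩) <;> omega
  have hzero_notMem : 0 ∉ odds := by simp [odds]
  have hfirstTop : ∀ f ∈ zigzags (n + 2) (m + 1), firstTop f ∈ insert (n + 2) (insert 0 odds) := by
    intro f hf
    rcases (firstTop_le_length (f := f)).eq_or_lt with h | h
    · simp [h]
    · rcases firstTop_eq_zero_or_odd (mem_zigzags.1 hf) h with h0 | ⟨j, hj⟩
      · simp [h0]
      · simp only [mem_insert, odds, mem_image, mem_range]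
        exact Or.inr (Or.inr ⟨j, by omega, hj.symm⟩)
  rw [zzOmega_eq_card_zigzags, card_eq_sum_card_fiberwise hfirstTop,
    sum_insert hlength_notMem, sum_insert hzero_notMem,
    sum_image fun _ _ _ _ h => by omega, card_filter_zigzags_firstTop_eq_length,
    card_filter_zigzags_firstTop_eq_zero (by omega), add_assoc]
  refine congrArg _ (congrArg _ (sum_congr rfl fun j hj => ?_))
  rw [mem_range] at hj
  rw [card_filter_zigzags_firstTop_eq_of_even (even_two_mul j) (by omega)]
  congr 2
  omega
end

section
/- Let Ω_n(m) denote the number of sequences (a_1,…,a_n) ∈ {1,…,m}^n with a_1 ≤ a_2 ≥ a_3 ≤ a_4 ≥ ⋯, with Ω_0(m) = 1. Then for all n ≥ 2 and m ≥ 1: Ω_n(m) = Ω_n(m−1) + Σ_{0 ≤ j ≤ (n−1)/2} Ω_{2j}(m−1)·Ω_{n−1−2j}(m). -/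
open Finset

def glue {α : Type*} {n : ℕ} (k : ℕ) (g : Fin k → α) (a : α) (h : Fin (n - 1 - k) → α)
    (x : Fin n) : α :=
  if hx : x.val < k then g ⟨x, hx⟩
  else if hx' : x.val = k then a
  else h ⟨x - (k + 1), by have := x.isLt; omega⟩

section

variable {α : Type*} {n k : ℕ} {g : Fin k → α} {a : α} {h : Fin (n - 1 - k) → α} {x : Fin n}

lemma glue_of_lt (hx : x.val < k) : glue k g a h x = g ⟨x, hx⟩ := dif_pos hx

lemma glue_of_eq (hx : x.val = k) : glue k g a h x = a := by
  rw [glue, dif_neg (by omega), dif_pos hx]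

lemma glue_of_gt (hx : k < x.val) :
    glue k g a h x = h ⟨x - (k + 1), by have := x.isLt; omega⟩ := by
  rw [glue, dif_neg (by omega), dif_neg (by omega)]

lemma glue_comp_castLE (hk : k ≤ n) : glue k g a h ∘ Fin.castLE hk = g := by
  funext i
  simp [glue_of_lt]

lemma glue_comp_natAdd (hk : k + 1 + (n - 1 - k) ≤ n) :
    glue k g a h ∘ Fin.castLE hk ∘ Fin.natAdd (k + 1) = h := by
  funext i
  rw [Function.comp_apply, Function.comp_apply, glue_of_gt (by simp; omega)]
  exact congrArg h (Fin.ext (by simp))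

lemma glue_eq_self (hk : k < n) (f : Fin n → α) (hfk : f ⟨k, hk⟩ = a) :
    glue k (f ∘ Fin.castLE hk.le) a (f ∘ Fin.castLE (by omega) ∘ Fin.natAdd (k + 1)) = f := by
  funext x
  rcases lt_trichotomy x.val k with hx | hx | hx
  · simp [glue_of_lt hx]
  · rw [glue_of_eq hx, ← hfk]
    exact congrArg f (Fin.ext hx.symm)
  · rw [glue_of_gt hx]
    exact congrArg f (Fin.ext (by simp; omega))

end

def IsZagSeq {n m : ℕ} (f : Fin n → Fin m) : Prop :=
  ∀ (i : ℕ) (h : i + 1 < n),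
    (i % 2 = 0 → f ⟨i + 1, h⟩ ≤ f ⟨i, Nat.lt_of_succ_lt h⟩) ∧
    (i % 2 = 1 → f ⟨i, Nat.lt_of_succ_lt h⟩ ≤ f ⟨i + 1, h⟩)

open scoped Classical in
noncomputable def zigZagSeqs (n m : ℕ) : Finset (Fin n → Fin m) := {f | IsZigZagSeq f}

open scoped Classical in
noncomputable def zagSeqs (n m : ℕ) : Finset (Fin n → Fin m) := {f | IsZagSeq f}

section

variable {n m : ℕ}

@[simp] lemma mem_zigZagSeqs {f : Fin n → Fin m} : f ∈ zigZagSeqs n m ↔ IsZigZagSeq f := by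
  simp [zigZagSeqs]

@[simp] lemma mem_zagSeqs {f : Fin n → Fin m} : f ∈ zagSeqs n m ↔ IsZagSeq f := by
  simp [zagSeqs]

lemma zzOmega_eq_card_zigZagSeqs (n m : ℕ) : zzOmega n m = #(zigZagSeqs n m) := by
  rw [zzOmega, ← Set.ncard_coe_finset]
  congr
  ext
  simp

lemma isZigZagSeq_rev_comp_iff {f : Fin n → Fin m} : IsZigZagSeq (Fin.rev ∘ f) ↔ IsZagSeq f := by
  simp [IsZigZagSeq, IsZagSeq, Fin.rev_le_rev]

lemma isZagSeq_comp_iff {k : ℕ} (e : Fin m ↪o Fin k) {f : Fin n → Fin m} :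
    IsZagSeq (e ∘ f) ↔ IsZagSeq f := by
  simp [IsZagSeq]

lemma card_zagSeqs (n m : ℕ) : #(zagSeqs n m) = zzOmega n m := by
  rw [zzOmega_eq_card_zigZagSeqs]
  refine card_nbij' (Fin.rev ∘ ·) (Fin.rev ∘ ·) (fun f hf => ?_) (fun f hf => ?_)
    (fun f _ => ?_) (fun f _ => ?_)
  · simpa [isZigZagSeq_rev_comp_iff] using hf
  · simpa [← isZigZagSeq_rev_comp_iff, Function.comp_def] using hf
  all_goals funext; simp

lemma card_zagSeqs_filter_not_exists_last (n m : ℕ) :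
    #{f ∈ zagSeqs n (m + 1) | ¬∃ i, f i = Fin.last m} = zzOmega n m := by
  rw [← card_zagSeqs]
  symm
  refine card_bij (fun g _ => Fin.castSucc ∘ g) (fun g hg => ?_)
    (fun g _ g' _ h => funext fun i => Fin.castSucc_injective _ (congrFun h i)) (fun f hf => ?_)
  · simp only [mem_filter, mem_zagSeqs, Function.comp_apply, Fin.castSucc_ne_last, exists_false,
      not_false_eq_true, and_true]
    exact (isZagSeq_comp_iff Fin.castSuccOrderEmb).2 (mem_zagSeqs.1 hg)
  · simp only [mem_filter, mem_zagSeqs, not_exists] at hf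
    have hcomp : Fin.castSucc ∘ (fun i => (f i).castPred (hf.2 i)) = f := by
      funext i; simp
    refine ⟨fun i => (f i).castPred (hf.2 i), ?_, hcomp⟩
    rw [mem_zagSeqs, ← isZagSeq_comp_iff Fin.castSuccOrderEmb]
    exact hcomp.symm ▸ hf.1

lemma IsZagSeq.comp_castLE {f : Fin n → Fin m} (hf : IsZagSeq f) {k : ℕ} (hk : k ≤ n) :
    IsZagSeq (f ∘ Fin.castLE hk) :=
  fun i h => hf i (by omega)

lemma IsZagSeq.isZigZagSeq_comp_natAdd {f : Fin n → Fin m} (hf : IsZagSeq f) {o l : ℕ}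
    (ho : o % 2 = 1) (hol : o + l ≤ n) : IsZigZagSeq (f ∘ Fin.castLE hol ∘ Fin.natAdd o) := by
  intro i h
  have hfi := hf (o + i) (by omega)
  exact ⟨fun hi => hfi.2 (by omega), fun hi => hfi.1 (by omega)⟩

lemma isZagSeq_glue {k : ℕ} (hk : Even k) {g : Fin k → Fin (m + 1)}
    {h : Fin (n - 1 - k) → Fin (m + 1)} (hg : IsZagSeq g) (hh : IsZigZagSeq h) :
    IsZagSeq (glue k g (Fin.last m) h) := by
  rw [Nat.even_iff] at hk
  intro i hi
  rcases lt_trichotomy (i + 1) k with hlt | heq | hgt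
  · rw [glue_of_lt (x := ⟨i, _⟩) (by simp; omega), glue_of_lt (x := ⟨i + 1, hi⟩) hlt]
    exact hg i hlt
  · rw [glue_of_eq (x := ⟨i + 1, hi⟩) heq]
    exact ⟨fun _ => by omega, fun _ => Fin.le_last _⟩
  · rcases (Nat.lt_succ_iff_lt_or_eq.1 hgt).symm with heq | hgt
    · rw [glue_of_eq (x := ⟨i, _⟩) heq.symm]
      exact ⟨fun _ => Fin.le_last _, fun _ => by omega⟩
    · rw [glue_of_gt (x := ⟨i, _⟩) hgt, glue_of_gt (x := ⟨i + 1, hi⟩) (by simp; omega)]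
      have hhi := hh (i - (k + 1)) (by omega)
      have hidx : i + 1 - (k + 1) = i - (k + 1) + 1 := by omega
      simp only [hidx]
      exact ⟨fun _ => hhi.2 (by omega), fun _ => hhi.1 (by omega)⟩

open scoped Classical in
noncomputable def zagSeqsFirstTopAt (n m k : ℕ) : Finset (Fin n → Fin (m + 1)) :=
  {f ∈ zagSeqs n (m + 1) | ∃ hk : k < n,
    f ⟨k, hk⟩ = Fin.last m ∧ ¬∃ i : Fin k, f (Fin.castLE hk.le i) = Fin.last m}

lemma mem_zagSeqsFirstTopAt {k : ℕ} {f : Fin n → Fin (m + 1)} :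
    f ∈ zagSeqsFirstTopAt n m k ↔ IsZagSeq f ∧ ∃ hk : k < n,
      f ⟨k, hk⟩ = Fin.last m ∧ ¬∃ i : Fin k, f (Fin.castLE hk.le i) = Fin.last m := by
  simp [zagSeqsFirstTopAt]

lemma disjoint_zagSeqsFirstTopAt {k k' : ℕ} (hkk' : k ≠ k') :
    Disjoint (zagSeqsFirstTopAt n m k) (zagSeqsFirstTopAt n m k') := by
  wlog hlt : k < k' generalizing k k'
  · exact (this hkk'.symm (by omega)).symm
  refine disjoint_left.2 fun f hf hf' => ?_
  obtain ⟨-, _, hfk, -⟩ := mem_zagSeqsFirstTopAt.1 hf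
  obtain ⟨-, _, -, hbefore⟩ := mem_zagSeqsFirstTopAt.1 hf'
  exact hbefore ⟨⟨k, hlt⟩, hfk⟩

lemma exists_mem_zagSeqsFirstTopAt {f : Fin n → Fin (m + 1)} (hf : IsZagSeq f)
    (htop : ∃ i, f i = Fin.last m) : ∃ j, 2 * j < n ∧ f ∈ zagSeqsFirstTopAt n m (2 * j) := by
  have hex : ∃ k, ∃ hk : k < n, f ⟨k, hk⟩ = Fin.last m :=
    let ⟨i, hi⟩ := htop; ⟨i, i.isLt, hi⟩
  obtain ⟨hk, hfk⟩ := Nat.find_spec hex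
  have hbefore : ¬∃ i : Fin (Nat.find hex), f (Fin.castLE hk.le i) = Fin.last m :=
    fun ⟨i, hi⟩ => Nat.find_min hex i.isLt ⟨_, hi⟩
  have heven : Nat.find hex % 2 = 0 := by
    by_contra hodd
    have hle := (hf (Nat.find hex - 1) (by omega)).1 (by omega)
    simp only [Nat.sub_add_cancel (show 1 ≤ Nat.find hex by omega), hfk] at hle
    exact hbefore ⟨⟨Nat.find hex - 1, by omega⟩, le_antisymm (Fin.le_last _) hle⟩
  refine ⟨Nat.find hex / 2, by omega, mem_zagSeqsFirstTopAt.2 ⟨hf, ?_⟩⟩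
  rw [Nat.two_mul_div_two_of_even (Nat.even_iff.2 heven)]
  exact ⟨hk, hfk, hbefore⟩

lemma filter_exists_eq_last_eq_biUnion_zagSeqsFirstTopAt :
    {f ∈ zagSeqs n (m + 1) | ∃ i, f i = Fin.last m} =
      (range ((n - 1) / 2 + 1)).biUnion fun j => zagSeqsFirstTopAt n m (2 * j) := by
  ext f
  simp only [mem_filter, mem_zagSeqs, mem_biUnion, mem_range]
  constructor
  · rintro ⟨hf, htop⟩
    obtain ⟨j, hj, hfj⟩ := exists_mem_zagSeqsFirstTopAt hf htop
    exact ⟨j, by omega, hfj⟩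
  · rintro ⟨j, -, hfj⟩
    obtain ⟨hf, _, hfk, -⟩ := mem_zagSeqsFirstTopAt.1 hfj
    exact ⟨hf, _, hfk⟩

lemma card_zagSeqsFirstTopAt {k : ℕ} (hk : k < n) (heven : Even k) :
    #(zagSeqsFirstTopAt n m k) = zzOmega k m * zzOmega (n - 1 - k) (m + 1) := by
  have hsuffix : k + 1 + (n - 1 - k) ≤ n := by omega
  rw [← card_zagSeqs_filter_not_exists_last, zzOmega_eq_card_zigZagSeqs, ← card_product]
  refine card_nbij' (fun f => (f ∘ Fin.castLE hk.le, f ∘ Fin.castLE hsuffix ∘ Fin.natAdd (k + 1)))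
    (fun p => glue k p.1 (Fin.last m) p.2) (fun f hf => ?_) (fun p hp => ?_)
    (fun f hf => ?_) (fun p hp => ?_)
  · obtain ⟨hf, _, -, hbefore⟩ := mem_zagSeqsFirstTopAt.1 hf
    simp only [coe_product, Set.mem_prod, coe_filter, mem_zagSeqs, Set.mem_ofPred_eq,
      Function.comp_apply, mem_coe, mem_zigZagSeqs]
    exact ⟨⟨hf.comp_castLE hk.le, hbefore⟩,
      hf.isZigZagSeq_comp_natAdd (by rw [Nat.even_iff] at heven; omega) hsuffix⟩
  · simp only [coe_product, Set.mem_prod, coe_filter, mem_zagSeqs, Set.mem_ofPred_eq,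
      mem_coe, mem_zigZagSeqs] at hp
    refine mem_zagSeqsFirstTopAt.2 ⟨isZagSeq_glue heven hp.1.1 hp.2, hk, glue_of_eq rfl, ?_⟩
    simpa [glue_of_lt] using hp.1.2
  · obtain ⟨-, _, hfk, -⟩ := mem_zagSeqsFirstTopAt.1 hf
    exact glue_eq_self hk f hfk
  · exact Prod.ext (glue_comp_castLE hk.le) (glue_comp_natAdd hsuffix)

end

/-- for `n ≥ 2` and `m ≥ 1`,
`Ω_n(m) = Ω_n(m-1) + Σ_{0 ≤ j ≤ (n-1)/2} Ω_{2j}(m-1)·Ω_{n-1-2j}(m)`. -/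
theorem zzOmega_rec_two (n m : ℕ) (hn : 2 ≤ n) (hm : 1 ≤ m) :
    zzOmega n m = zzOmega n (m - 1) +
      ∑ j ∈ Finset.range ((n - 1) / 2 + 1),
        zzOmega (2 * j) (m - 1) * zzOmega (n - 1 - 2 * j) m := by
  obtain ⟨m, rfl⟩ : ∃ m', m = m' + 1 := ⟨m - 1, by omega⟩
  rw [Nat.add_sub_cancel, ← card_zagSeqs,
    ← card_filter_add_card_filter_not (p := fun f => ∃ i, f i = Fin.last m), add_comm,
    card_zagSeqs_filter_not_exists_last, filter_exists_eq_last_eq_biUnion_zagSeqsFirstTopAt,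
    card_biUnion fun j _ j' _ hjj' => disjoint_zagSeqsFirstTopAt (by omega)]
  refine congrArg _ (sum_congr rfl fun j hj => card_zagSeqsFirstTopAt ?_ (even_two_mul j))
  rw [mem_range] at hj
  omega
end

section
/- Let Ω_n(m) be the zig-zag order polynomial. For all n ≥ 2 and m ≥ 2: Ω_{n−2}(m) = Σ_{0 ≤ j ≤ n−1} (−1)^j · Ω_j(m−1) · Ω_{n−1−j}(m). -/
namespace ZZaux


/-- One transfer step: if `b` then new entry must be ≥ old (sum over `j ≤ k`),
else new entry ≤ old (sum over `j ≥ k`). -/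
def ext (m : ℕ) (b : Bool) (u : Fin m → ℕ) : Fin m → ℕ :=
  fun k => ∑ j, if (if b then j ≤ k else k ≤ j) then u j else 0

def cnt (m e : ℕ) : ℕ → Fin m → ℕ
  | 0 => fun _ => 1
  | n+1 => ext m (decide ((n + e) % 2 = 0)) (cnt m e n)

def stv (m e : ℕ) : ℕ → Fin (m+1) → ℕ
  | 0 => fun k => if k = Fin.last m then 1 else 0
  | n+1 => ext (m+1) (decide ((n + e) % 2 = 0)) (stv m e n)

def cc (m e : ℕ) : ℕ → ℕ
  | 0 => 1
  | i+1 => ∑ k, cnt m e i k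

lemma ext_sum {ι : Type*} (m : ℕ) (b : Bool) (s : Finset ι) (F : ι → Fin m → ℕ) :
    ext m b (∑ i ∈ s, F i) = ∑ i ∈ s, ext m b (F i) := by
  funext k
  simp only [ext, Finset.sum_apply]
  rw [Finset.sum_comm]
  apply Finset.sum_congr rfl
  intro j _
  split <;> simp

lemma ext_add (m : ℕ) (b : Bool) (x y : Fin m → ℕ) :
    ext m b (x + y) = ext m b x + ext m b y := by
  funext k
  simp only [ext, Pi.add_apply]
  rw [← Finset.sum_add_distrib]
  apply Finset.sum_congr rfl
  intro j _
  split_ifs <;> simp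

lemma ext_smul (m : ℕ) (b : Bool) (c : ℕ) (x : Fin m → ℕ) :
    ext m b (c • x) = c • ext m b x := by
  funext k
  simp only [ext, Pi.smul_apply, smul_eq_mul, Finset.mul_sum]
  apply Finset.sum_congr rfl
  intro j _
  split <;> simp

lemma stv_one_succ (m n : ℕ) : stv m 1 (n+1) = cnt (m+1) 0 n := by
  induction n with
  | zero =>
      funext k
      simp only [stv, cnt, ext]
      norm_num
      have h : ∀ x : Fin (m+1),
          (if k ≤ x then if x = Fin.last m then 1 else 0 else 0)
            = if x = Fin.last m then 1 else 0 := by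
        intro x
        by_cases hx : x = Fin.last m
        · simp [hx, Fin.le_last]
        · simp [hx]
      rw [Finset.sum_congr rfl fun x _ => h x]
      simp
  | succ n ih =>
      show ext _ _ (stv m 1 (n+1)) = ext _ _ (cnt (m+1) 0 n)
      rw [ih]
      have : (n + 1 + 1) % 2 = (n + 0) % 2 := by omega
      rw [show ((n+1+1) % 2) = ((n+0) % 2) from this]

lemma stv_zero_succ (m n : ℕ) : stv m 0 (n+1) = stv m 1 n := by
  induction n with
  | zero =>
      funext k
      simp only [stv, ext]
      norm_num
      have h : ∀ x : Fin (m+1),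
          (if x ≤ k then if x = Fin.last m then 1 else 0 else 0)
            = if x = Fin.last m then (if x ≤ k then 1 else 0) else 0 := by
        intro x
        by_cases hx : x = Fin.last m <;> simp [hx]
      rw [Finset.sum_congr rfl fun x _ => h x]
      rw [Finset.sum_ite_eq' Finset.univ (Fin.last m)]
      simp only [Finset.mem_univ, if_true]
      by_cases hk : k = Fin.last m
      · simp [hk]
      · have : ¬ (Fin.last m ≤ k) := by
          simpa [Fin.last_le_iff] using hk
        simp [this, hk]
  | succ n ih =>
      show ext _ _ (stv m 0 (n+1)) = ext _ _ (stv m 1 n)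
      rw [ih]

lemma cnt_one_rev (m n : ℕ) : cnt m 1 n = fun k => cnt m 0 n k.rev := by
  induction n with
  | zero => rfl
  | succ n ih =>
      funext k
      show ext m (decide ((n+1) % 2 = 0)) (cnt m 1 n) k
        = ext m (decide ((n+0) % 2 = 0)) (cnt m 0 n) k.rev
      rw [ih]
      simp only [ext]
      apply Fintype.sum_bijective Fin.rev Fin.rev_bijective
      intro x
      have hx1 : (x.rev ≤ k.rev) ↔ (k ≤ x) := Fin.rev_le_rev
      have hx2 : (k.rev ≤ x.rev) ↔ (x ≤ k) := Fin.rev_le_rev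
      rcases Nat.even_or_odd n with he | ho
      · have h0 : n % 2 = 0 := Nat.even_iff.mp he
        simp [Nat.add_mod, h0, hx1, hx2]
      · have h1 : n % 2 = 1 := Nat.odd_iff.mp ho
        simp [Nat.add_mod, h1, hx1, hx2]

lemma sum_cnt_one (m n : ℕ) : ∑ k, cnt m 1 n k = ∑ k, cnt m 0 n k := by
  rw [cnt_one_rev]
  exact Fintype.sum_bijective Fin.rev Fin.rev_bijective _ _ (fun x => rfl)

def etop (m : ℕ) : Fin (m+1) → ℕ := fun k => if k = Fin.last m then 1 else 0

lemma stv_zero (m e : ℕ) : stv m e 0 = etop m := rfl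

lemma ext_zero (m : ℕ) (b : Bool) : ext m b (0 : Fin m → ℕ) = 0 := by
  funext k
  simp [ext]

lemma sum_snoc (m : ℕ) (x : Fin m → ℕ) :
    ∑ k, (Fin.snoc x 0 : Fin (m+1) → ℕ) k = ∑ j, x j := by
  rw [Fin.sum_univ_castSucc]
  simp

lemma ext_snoc (m : ℕ) (b : Bool) (v : Fin m → ℕ) :
    ext (m+1) b (Fin.snoc v 0) =
      (Fin.snoc (ext m b v) 0 : Fin (m+1) → ℕ)
        + (if b then (∑ j, v j) else 0) • etop m := by
  funext k
  refine Fin.lastCases ?_ ?_ k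
  · simp only [ext, Pi.add_apply, Pi.smul_apply, Fin.snoc_last, smul_eq_mul, etop,
      if_pos rfl, mul_one, zero_add]
    cases b with
    | true =>
        simp only [if_true]
        rw [Fin.sum_univ_castSucc]
        simp [Fin.le_last]
    | false =>
        norm_num
  · intro j
    have hne : Fin.castSucc j ≠ Fin.last m := (Fin.castSucc_lt_last j).ne
    simp only [ext, Pi.add_apply, Pi.smul_apply, Fin.snoc_castSucc, smul_eq_mul, etop,
      if_neg hne, mul_zero, add_zero]
    rw [Fin.sum_univ_castSucc]
    have hlast : (if (if b then Fin.last m ≤ Fin.castSucc j else Fin.castSucc j ≤ Fin.last m)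
        then (Fin.snoc v 0 : Fin (m+1) → ℕ) (Fin.last m) else 0) = 0 := by
      split <;> simp
    rw [hlast, add_zero]
    apply Finset.sum_congr rfl
    intro j' _
    rw [Fin.snoc_castSucc]
    simp [Fin.castSucc_le_castSucc_iff]

lemma decomp (m ε n : ℕ) :
    cnt (m+1) ε n = (Fin.snoc (cnt m ε n) 0 : Fin (m+1) → ℕ)
      + ∑ i ∈ Finset.range (n+1),
          (if i = 0 ∨ (i+ε) % 2 = 1 then cc m ε i • stv m ((ε+i) % 2) (n-i) else 0) := by
  induction n with
  | zero =>
      rw [Finset.sum_range_one]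
      simp only [if_pos (Or.inl rfl), cc]
      funext k
      refine Fin.lastCases ?_ ?_ k
      · simp [cnt, stv, etop, Fin.snoc_last]
      · intro j
        simp [cnt, stv, etop, Fin.snoc_castSucc, (Fin.castSucc_lt_last j).ne]
  | succ n ih =>
      show ext (m+1) (decide ((n+ε) % 2 = 0)) (cnt (m+1) ε n) = _
      rw [ih, ext_add, ext_sum]
      set b := decide ((n+ε) % 2 = 0) with hb
      rw [ext_snoc]
      have hstep : ∀ i ∈ Finset.range (n+1),
          ext (m+1) b (if i = 0 ∨ (i+ε) % 2 = 1 then cc m ε i • stv m ((ε+i) % 2) (n-i) else 0)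
            = (if i = 0 ∨ (i+ε) % 2 = 1 then cc m ε i • stv m ((ε+i) % 2) (n+1-i) else 0) := by
        intro i hi
        rw [Finset.mem_range] at hi
        by_cases hcond : i = 0 ∨ (i+ε) % 2 = 1
        · rw [if_pos hcond, if_pos hcond, ext_smul]
          congr 1
          have h1 : n + 1 - i = (n - i) + 1 := by omega
          rw [h1]
          have h2 : ((n-i) + ((ε+i) % 2)) % 2 = (n + ε) % 2 := by omega
          show ext (m+1) b _
            = ext (m+1) (decide (((n-i) + ((ε+i) % 2)) % 2 = 0)) (stv m ((ε+i) % 2) (n-i))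
          rw [h2]
        · rw [if_neg hcond, if_neg hcond, ext_zero]
      rw [Finset.sum_congr rfl hstep]
      have hext : ext m b (cnt m ε n) = cnt m ε (n+1) := rfl
      rw [hext]
      have hnew : (if b then (∑ j, cnt m ε n j) else 0) • etop m
          = (if (n+1) = 0 ∨ ((n+1)+ε) % 2 = 1 then cc m ε (n+1) • stv m ((ε+(n+1)) % 2) ((n+1)-(n+1)) else 0) := by
        have hs : stv m ((ε+(n+1)) % 2) ((n+1)-(n+1)) = etop m := by
          rw [Nat.sub_self]
          rfl
        rw [hs]
        by_cases hpar : (n+ε) % 2 = 0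
        · have hb1 : b = true := by simp [hb, hpar]
          have hcond : (n+1) = 0 ∨ ((n+1)+ε) % 2 = 1 := Or.inr (by omega)
          rw [if_pos hcond, hb1, if_pos rfl]
          rfl
        · have hb0 : b = false := by simp [hb, hpar]
          have hcond : ¬((n+1) = 0 ∨ ((n+1)+ε) % 2 = 1) := by
            push_neg
            exact ⟨Nat.succ_ne_zero n, by omega⟩
          rw [if_neg hcond, hb0, if_neg (by simp)]
          funext k
          simp [etop]
      rw [Finset.sum_range_succ (fun i => if i = 0 ∨ (i+ε) % 2 = 1 then cc m ε i • stv m ((ε+i) % 2) (n+1-i) else 0) (n+1)]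
      rw [hnew]
      abel


lemma snoc_eval_lt {n m : ℕ} (g : Fin (n+1) → Fin m) (x : Fin m) (i : ℕ)
    (h1 : i < n+1) (h2 : i < n+2) :
    (Fin.snoc g x : Fin (n+2) → Fin m) ⟨i, h2⟩ = g ⟨i, h1⟩ := by
  have h : (⟨i, h2⟩ : Fin (n+2)) = Fin.castSucc ⟨i, h1⟩ := rfl
  rw [h, Fin.snoc_castSucc]

lemma snoc_eval_last {n m : ℕ} (g : Fin (n+1) → Fin m) (x : Fin m) (h2 : n+1 < n+2) :
    (Fin.snoc g x : Fin (n+2) → Fin m) ⟨n+1, h2⟩ = x := by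
  have h : (⟨n+1, h2⟩ : Fin (n+2)) = Fin.last (n+1) := rfl
  rw [h, Fin.snoc_last]

lemma isZigZagSeq_snoc {n m : ℕ} (g : Fin (n+1) → Fin m) (x : Fin m) :
    IsZigZagSeq (Fin.snoc g x : Fin (n+2) → Fin m) ↔
      IsZigZagSeq g ∧ ((n % 2 = 0 → g (Fin.last n) ≤ x) ∧ (n % 2 = 1 → x ≤ g (Fin.last n))) := by
  constructor
  · intro H
    refine ⟨?_, ?_, ?_⟩
    · intro i h
      have h2 : i + 1 < n + 2 := by omega
      have hH := H i h2
      rwa [snoc_eval_lt g x i (by omega) _, snoc_eval_lt g x (i+1) h _] at hH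
    · intro hpar
      have h2 : n + 1 < n + 2 := by omega
      have hH := (H n h2).1 hpar
      rwa [snoc_eval_lt g x n (by omega) _, snoc_eval_last g x _] at hH
    · intro hpar
      have h2 : n + 1 < n + 2 := by omega
      have hH := (H n h2).2 hpar
      rwa [snoc_eval_lt g x n (by omega) _, snoc_eval_last g x _] at hH
  · rintro ⟨hg, hle, hge⟩
    intro i h
    by_cases hi : i + 1 < n + 1
    · rw [snoc_eval_lt g x i (by omega), snoc_eval_lt g x (i+1) hi]
      exact hg i hi
    · have hi' : n = i := by omega
      subst hi'
      rw [snoc_eval_lt g x n (by omega), snoc_eval_last g x]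
      exact ⟨hle, hge⟩

open scoped Classical in
lemma natcard_sigma {ι : Type*} [Fintype ι] (β : ι → Type*) [∀ i, Finite (β i)] :
    Nat.card (Σ i, β i) = ∑ i, Nat.card (β i) := by
  letI : ∀ i, Fintype (β i) := fun i => Fintype.ofFinite (β i)
  simp [Nat.card_eq_fintype_card]

lemma pointed (m : ℕ) : ∀ (n : ℕ) (k : Fin m),
    Nat.card {f : Fin (n+1) → Fin m // IsZigZagSeq f ∧ f (Fin.last n) = k}
      = cnt m 0 n k := by
  intro n
  induction n with
  | zero =>
      intro k
      have hvac : ∀ f : Fin 1 → Fin m, IsZigZagSeq f := by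
        intro f i h
        omega
      have e : {f : Fin 1 → Fin m // IsZigZagSeq f ∧ f (Fin.last 0) = k} ≃ PUnit.{1} := by
        refine ⟨fun _ => PUnit.unit, fun _ => ⟨fun _ => k, hvac _, rfl⟩, ?_, ?_⟩
        · intro f
          apply Subtype.ext
          funext i
          rw [Subsingleton.elim i (Fin.last 0)]
          exact f.2.2.symm
        · intro u
          rfl
      rw [Nat.card_congr e]
      simp [cnt]
  | succ n ih =>
      intro k
      have e : {f : Fin (n+2) → Fin m // IsZigZagSeq f ∧ f (Fin.last (n+1)) = k}
          ≃ Σ j : Fin m, {g : Fin (n+1) → Fin m //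
              (IsZigZagSeq g ∧ g (Fin.last n) = j) ∧
              ((n % 2 = 0 → j ≤ k) ∧ (n % 2 = 1 → k ≤ j))} := by
        refine ⟨?_, ?_, ?_, ?_⟩
        · intro f
          refine ⟨f.1 (Fin.castSucc (Fin.last n)), ⟨Fin.init f.1, ?_⟩⟩
          have hf : Fin.snoc (Fin.init f.1) (f.1 (Fin.last (n+1))) = f.1 :=
            Fin.snoc_init_self f.1
          have hz : IsZigZagSeq (Fin.snoc (Fin.init f.1) (f.1 (Fin.last (n+1))) :
              Fin (n+2) → Fin m) := by
            rw [hf]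
            exact f.2.1
          rw [isZigZagSeq_snoc] at hz
          have hlast : Fin.init f.1 (Fin.last n) = f.1 (Fin.castSucc (Fin.last n)) := rfl
          refine ⟨⟨hz.1, hlast⟩, ?_, ?_⟩
          · intro hpar
            have := hz.2.1 hpar
            rw [hlast, f.2.2] at this
            exact this
          · intro hpar
            have := hz.2.2 hpar
            rw [hlast, f.2.2] at this
            exact this
        · intro x
          refine ⟨Fin.snoc x.2.1 k, ?_, ?_⟩
          · rw [isZigZagSeq_snoc]
            refine ⟨x.2.2.1.1, ?_, ?_⟩
            · intro hpar
              rw [x.2.2.1.2]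
              exact x.2.2.2.1 hpar
            · intro hpar
              rw [x.2.2.1.2]
              exact x.2.2.2.2 hpar
          · exact Fin.snoc_last _ _
        · intro f
          apply Subtype.ext
          show Fin.snoc (Fin.init f.1) k = f.1
          have hs := Fin.snoc_init_self f.1
          rw [f.2.2] at hs
          exact hs
        · intro x
          refine Sigma.subtype_ext ?_ ?_
          · show (Fin.snoc x.2.1 k : Fin (n+2) → Fin m) (Fin.castSucc (Fin.last n)) = x.1
            rw [Fin.snoc_castSucc]
            exact x.2.2.1.2
          · show Fin.init (Fin.snoc x.2.1 k : Fin (n+2) → Fin m) = x.2.1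
            simp
      rw [Nat.card_congr e, natcard_sigma]
      show _ = ext m (decide ((n + 0) % 2 = 0)) (cnt m 0 n) k
      unfold ext
      apply Finset.sum_congr rfl
      intro j _
      by_cases hcond : (if decide ((n + 0) % 2 = 0) = true then j ≤ k else k ≤ j)
      · rw [if_pos hcond]
        have hC : (n % 2 = 0 → j ≤ k) ∧ (n % 2 = 1 → k ≤ j) := by
          by_cases hpar : n % 2 = 0
          · have : j ≤ k := by
              simpa [hpar] using hcond
            exact ⟨fun _ => this, fun h => absurd h (by omega)⟩
          · have hpar1 : n % 2 = 1 := by omega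
            have : k ≤ j := by
              simpa [Nat.add_zero, hpar1] using hcond
            exact ⟨fun h => absurd h (by omega), fun _ => this⟩
        have e2 : {g : Fin (n+1) → Fin m //
              (IsZigZagSeq g ∧ g (Fin.last n) = j) ∧
              ((n % 2 = 0 → j ≤ k) ∧ (n % 2 = 1 → k ≤ j))}
            ≃ {g : Fin (n+1) → Fin m // IsZigZagSeq g ∧ g (Fin.last n) = j} :=
          Equiv.subtypeEquivRight (fun g => by
            constructor
            · exact fun h => h.1
            · exact fun h => ⟨h, hC⟩)
        rw [Nat.card_congr e2, ih j]
      · rw [if_neg hcond]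
        have hempty : IsEmpty {g : Fin (n+1) → Fin m //
              (IsZigZagSeq g ∧ g (Fin.last n) = j) ∧
              ((n % 2 = 0 → j ≤ k) ∧ (n % 2 = 1 → k ≤ j))} := by
          constructor
          rintro ⟨g, ⟨_, hc1, hc2⟩⟩
          apply hcond
          by_cases hpar : n % 2 = 0
          · simpa [hpar] using hc1 hpar
          · have hpar1 : n % 2 = 1 := by omega
            simpa [Nat.add_zero, hpar1] using hc2 hpar1
        simp [Nat.card_of_isEmpty]


lemma zzOmega_zero (m : ℕ) : zzOmega 0 m = 1 := by
  rw [zzOmega, ← Nat.card_coe_set_eq]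
  have hall : {f : Fin 0 → Fin m | IsZigZagSeq f} = Set.univ := by
    apply Set.eq_univ_of_forall
    intro f
    intro i h
    omega
  rw [hall, Nat.card_univ]
  simp [Nat.card_eq_fintype_card]

lemma zzOmega_succ (m n : ℕ) : zzOmega (n+1) m = ∑ k, cnt m 0 n k := by
  rw [zzOmega, ← Nat.card_coe_set_eq]
  have e1 := (Equiv.sigmaFiberEquiv
    (fun f : {f : Fin (n+1) → Fin m // IsZigZagSeq f} => f.1 (Fin.last n))).symm
  rw [Set.coe_setOf, Nat.card_congr e1, natcard_sigma]
  apply Finset.sum_congr rfl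
  intro k _
  rw [← pointed m n k]
  exact Nat.card_congr (Equiv.subtypeSubtypeEquivSubtypeInter
    (fun f : Fin (n+1) → Fin m => IsZigZagSeq f) (fun f => f (Fin.last n) = k))

lemma sum_stv_one (M l : ℕ) : (∑ k, stv M 1 l k) = zzOmega l (M+1) := by
  cases l with
  | zero =>
      rw [zzOmega_zero]
      show (∑ k, etop M k) = 1
      unfold etop
      rw [Finset.sum_ite_eq' Finset.univ (Fin.last M) (fun _ => 1)]
      simp
  | succ l =>
      rw [stv_one_succ, zzOmega_succ]

lemma sum_stv_zero (M l : ℕ) : (∑ k, stv M 0 (l+1) k) = zzOmega l (M+1) := by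
  rw [stv_zero_succ]
  exact sum_stv_one M l

lemma cc_eq (M i ε : ℕ) (hε : ε = 0 ∨ ε = 1) : cc M ε i = zzOmega i M := by
  cases i with
  | zero => rw [zzOmega_zero]; rfl
  | succ i =>
      show (∑ k, cnt M ε i k) = _
      rcases hε with h | h <;> subst h
      · rw [zzOmega_succ]
      · rw [sum_cnt_one, zzOmega_succ]

lemma main_eps (M n ε : ℕ) (hε : ε = 0 ∨ ε = 1) :
    zzOmega (n+2) (M+1)
      = zzOmega (n+2) M + (∑ k, stv M ((ε + 0) % 2) (n+1) k)
        + ∑ i ∈ Finset.range (n+2),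
            (if i ≠ 0 ∧ (i+ε) % 2 = 1 then zzOmega i M * zzOmega (n+1-i) (M+1) else 0) := by
  have hd := decomp M ε (n+1)
  have hsum := congrArg (fun v : Fin (M+1) → ℕ => ∑ k, v k) hd
  simp only [Pi.add_apply, Finset.sum_apply, ite_apply, Pi.zero_apply,
    Finset.sum_add_distrib] at hsum
  have hL : (∑ k, cnt (M+1) ε (n+1) k) = zzOmega (n+2) (M+1) := by
    rcases hε with h | h <;> subst h
    · rw [zzOmega_succ]
    · rw [sum_cnt_one, zzOmega_succ]
  have hB : (∑ j, cnt M ε (n+1) j) = zzOmega (n+2) M := by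
    rcases hε with h | h <;> subst h
    · rw [zzOmega_succ]
    · rw [sum_cnt_one, zzOmega_succ]
  rw [← hL, hsum, sum_snoc, hB]
  rw [Finset.sum_comm]
  have hterm : ∀ i ∈ Finset.range (n+2),
      (∑ k, if i = 0 ∨ (i+ε) % 2 = 1 then (cc M ε i • stv M ((ε+i) % 2) (n+1-i)) k else 0)
        = (if i = 0 then (∑ k, stv M ((ε + 0) % 2) (n+1) k) else 0)
          + (if i ≠ 0 ∧ (i+ε) % 2 = 1 then zzOmega i M * zzOmega (n+1-i) (M+1) else 0) := by
    intro i hi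
    rw [Finset.mem_range] at hi
    by_cases hi0 : i = 0
    · subst hi0
      have hcond : (0 = 0 ∨ (0+ε) % 2 = 1) := Or.inl rfl
      simp only [if_pos hcond, if_pos rfl]
      have h0 : ¬(0 ≠ 0 ∧ (0+ε) % 2 = 1) := by simp
      rw [if_neg h0, add_zero]
      show (∑ k, (cc M ε 0 • stv M ((ε+0) % 2) (n+1-0)) k) = _
      simp only [cc, one_smul, Nat.sub_zero]
      simp
    · by_cases hpar : (i+ε) % 2 = 1
      · have hcond : (i = 0 ∨ (i+ε) % 2 = 1) := Or.inr hpar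
        simp only [if_pos hcond, if_neg hi0, if_pos (And.intro hi0 hpar), zero_add]
        have hsmul : ∀ k, (cc M ε i • stv M ((ε+i) % 2) (n+1-i)) k
            = cc M ε i * stv M ((ε+i) % 2) (n+1-i) k := fun k => rfl
        simp only [hsmul]
        rw [← Finset.mul_sum]
        have hp2 : (ε+i) % 2 = 1 := by omega
        rw [hp2, sum_stv_one, cc_eq M i ε hε]
      · have hcond : ¬(i = 0 ∨ (i+ε) % 2 = 1) := by
          push_neg
          exact ⟨hi0, hpar⟩
        simp only [if_neg hcond, if_neg hi0, if_neg (fun h : _ ∧ _ => hpar h.2)]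
        simp
  rw [Finset.sum_congr rfl hterm, Finset.sum_add_distrib]
  rw [Finset.sum_ite_eq' (Finset.range (n+2)) 0
    (fun _ => (∑ k, stv M ((ε + 0) % 2) (n+1) k))]
  have h02 : (0:ℕ) ∈ Finset.range (n+2) := by simp
  rw [if_pos h02]
  omega

lemma main0 (M n : ℕ) :
    zzOmega (n+2) (M+1)
      = zzOmega (n+2) M + zzOmega n (M+1)
        + ∑ i ∈ Finset.range (n+2),
            (if i % 2 = 1 then zzOmega i M * zzOmega (n+1-i) (M+1) else 0) := by
  have h := main_eps M n 0 (Or.inl rfl)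
  rw [show ((0:ℕ) + 0) % 2 = 0 from rfl] at h
  rw [sum_stv_zero M n] at h
  rw [h]
  congr 1
  apply Finset.sum_congr rfl
  intro i _
  by_cases hp : i % 2 = 1
  · rw [if_pos (show i ≠ 0 ∧ (i+0) % 2 = 1 by omega), if_pos hp]
  · rw [if_neg (show ¬(i ≠ 0 ∧ (i+0) % 2 = 1) by omega), if_neg hp]

lemma main1 (M n : ℕ) :
    zzOmega (n+2) (M+1)
      = zzOmega (n+2) M + zzOmega (n+1) (M+1)
        + ∑ i ∈ Finset.range (n+2),
            (if i ≠ 0 ∧ i % 2 = 0 then zzOmega i M * zzOmega (n+1-i) (M+1) else 0) := by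
  have h := main_eps M n 1 (Or.inr rfl)
  rw [show ((1:ℕ) + 0) % 2 = 1 from rfl, sum_stv_one M (n+1)] at h
  rw [h]
  congr 1
  apply Finset.sum_congr rfl
  intro i _
  by_cases hp : i ≠ 0 ∧ i % 2 = 0
  · rw [if_pos (show i ≠ 0 ∧ (i+1) % 2 = 1 by omega), if_pos hp]
  · rw [if_neg (show ¬(i ≠ 0 ∧ (i+1) % 2 = 1) by omega), if_neg hp]

theorem key (n m : ℕ) (hn : 2 ≤ n) (hm : 2 ≤ m) :
    (zzOmega (n - 2) m : ℤ) =
      ∑ j ∈ Finset.range n,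
        (-1 : ℤ) ^ j * zzOmega j (m - 1) * zzOmega (n - 1 - j) m := by
  obtain ⟨N, rfl⟩ : ∃ N, n = N + 2 := ⟨n - 2, by omega⟩
  obtain ⟨K, rfl⟩ : ∃ K, m = K + 2 := ⟨m - 2, by omega⟩
  have e1 : N + 2 - 2 = N := by omega
  have e2 : K + 2 - 1 = K + 1 := by omega
  have hidx : ∀ j : ℕ, N + 2 - 1 - j = N + 1 - j := fun j => by omega
  rw [e1, e2]
  simp only [hidx]
  have h0 := main0 (K+1) N
  have h1 := main1 (K+1) N
  have hk : K + 1 + 1 = K + 2 := rfl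
  rw [hk] at h0 h1
  have h0' := congrArg (fun x : ℕ => (x : ℤ)) h0
  have h1' := congrArg (fun x : ℕ => (x : ℤ)) h1
  push_cast [apply_ite (fun x : ℕ => (x : ℤ))] at h0' h1'
  have hsplit : ∀ j : ℕ,
      (-1:ℤ)^j * (zzOmega j (K+1) : ℤ) * (zzOmega (N+1-j) (K+2) : ℤ)
        = (if j % 2 = 0 then (zzOmega j (K+1) : ℤ) * (zzOmega (N+1-j) (K+2) : ℤ) else 0)
          - (if j % 2 = 1 then (zzOmega j (K+1) : ℤ) * (zzOmega (N+1-j) (K+2) : ℤ) else 0) := by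
    intro j
    rcases Nat.even_or_odd j with he | ho
    · rw [he.neg_one_pow, if_pos (Nat.even_iff.mp he),
        if_neg (by have := Nat.even_iff.mp he; omega)]
      ring
    · rw [ho.neg_one_pow, if_neg (by have := Nat.odd_iff.mp ho; omega),
        if_pos (Nat.odd_iff.mp ho)]
      ring
  rw [Finset.sum_congr rfl (fun j _ => hsplit j), Finset.sum_sub_distrib]
  have hE : (∑ j ∈ Finset.range (N+2),
        if j % 2 = 0 then (zzOmega j (K+1) : ℤ) * (zzOmega (N+1-j) (K+2) : ℤ) else 0)
      = (zzOmega (N+1) (K+2) : ℤ)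
        + ∑ j ∈ Finset.range (N+2),
            (if j ≠ 0 ∧ j % 2 = 0 then (zzOmega j (K+1) : ℤ) * (zzOmega (N+1-j) (K+2) : ℤ) else 0) := by
    have hterm : ∀ j ∈ Finset.range (N+2),
        (if j % 2 = 0 then (zzOmega j (K+1) : ℤ) * (zzOmega (N+1-j) (K+2) : ℤ) else 0)
          = (if j = 0 then (zzOmega j (K+1) : ℤ) * (zzOmega (N+1-j) (K+2) : ℤ) else 0)
            + (if j ≠ 0 ∧ j % 2 = 0 then (zzOmega j (K+1) : ℤ) * (zzOmega (N+1-j) (K+2) : ℤ) else 0) := by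
      intro j _
      by_cases hj : j = 0
      · subst hj
        norm_num
      · by_cases hp : j % 2 = 0 <;> simp [hj, hp]
    rw [Finset.sum_congr rfl hterm, Finset.sum_add_distrib]
    rw [Finset.sum_ite_eq' (Finset.range (N+2)) 0
      (fun j => (zzOmega j (K+1) : ℤ) * (zzOmega (N+1-j) (K+2) : ℤ))]
    rw [if_pos (by simp : (0:ℕ) ∈ Finset.range (N+2))]
    rw [zzOmega_zero]
    norm_num
  rw [hE]
  linarith [h0', h1']

end ZZaux

/-- for `n ≥ 2` and `m ≥ 2`,
`Ω_{n-2}(m) = Σ_{0 ≤ j ≤ n-1} (-1)^j · Ω_j(m-1) · Ω_{n-1-j}(m)`. -/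
theorem zzOmega_alternating_rec (n m : ℕ) (hn : 2 ≤ n) (hm : 2 ≤ m) :
    (zzOmega (n - 2) m : ℤ) =
      ∑ j ∈ Finset.range n,
        (-1 : ℤ) ^ j * zzOmega j (m - 1) * zzOmega (n - 1 - j) m := by
  exact ZZaux.key n m hn hm
end

section
/- For each fixed m ≥ 2, the formal power series F_m(y) = Σ_{n≥0} Ω_n(m) yⁿ satisfies F_m(y) · (F_{m−1}(−y) − y) = 1. -/
/-- The ordinary generating function `F_m(y) = Σ_{n≥0} Ω_n(m) yⁿ` in `ℚ[[y]]`. -/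
noncomputable def zzF (m : ℕ) : PowerSeries ℚ :=
  PowerSeries.mk fun n => (zzOmega n m : ℚ)

/-!
Comparing coefficients, the claim is `∑_{p ≤ n+1} (-1)^p Ω_p(m-1) Ω_{n+1-p}(m) = Ω_n(m)`.
Classify the zig-zag words over `{0, …, m-1}` by the position `p` of their first `0`. If the
pattern descends into `p`, the word splits into an arbitrary word over `{1, …, m-1}` before `p`
and an arbitrary zig-zag word of the opposite phase after `p` (counted by the same `Ω`, by
reversing the alphabet). If it ascends into `p`, there is no such word, except for `p = 0`,
where the next letter is forced to be `0` as well. Doing this both for the up-down and the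
down-up pattern, which have the same number of words, and subtracting gives the identity.
-/

/-- `IsZigZagFrom 0` is `IsZigZagSeq` by definition; odd phases `ε` give the down-up pattern. -/
def IsZigZagFrom {α : Type*} [LE α] (ε : ℕ) {n : ℕ} (f : Fin n → α) : Prop :=
  ∀ (i : ℕ) (h : i + 1 < n),
    ((i + ε) % 2 = 0 → f ⟨i, Nat.lt_of_succ_lt h⟩ ≤ f ⟨i + 1, h⟩) ∧
    ((i + ε) % 2 = 1 → f ⟨i + 1, h⟩ ≤ f ⟨i, Nat.lt_of_succ_lt h⟩)

def Fin.drop {α : Type*} {n : ℕ} (k : ℕ) (w : Fin n → α) : Fin (n - k) → α :=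
  fun j => w ⟨k + j, by omega⟩

section ZigZag

variable {α β : Type*} [LE α] [LE β] {ε n : ℕ}

theorem isZigZagFrom_comp_iff {φ : α → β} (hφ : ∀ a b, φ a ≤ φ b ↔ a ≤ b) (f : Fin n → α) :
    IsZigZagFrom ε (φ ∘ f) ↔ IsZigZagFrom ε f := by
  simp only [IsZigZagFrom, Function.comp_apply, hφ]

theorem isZigZagFrom_add_one_comp_iff {φ : α → β} (hφ : ∀ a b, φ a ≤ φ b ↔ b ≤ a)
    (f : Fin n → α) : IsZigZagFrom (ε + 1) (φ ∘ f) ↔ IsZigZagFrom ε f := by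
  refine forall₂_congr fun i h => ?_
  simp only [Function.comp_apply, hφ]
  constructor <;> rintro ⟨h₀, h₁⟩ <;>
    exact ⟨fun hi => h₁ (by omega), fun hi => h₀ (by omega)⟩

theorem IsZigZagFrom.take {f : Fin n → α} (hf : IsZigZagFrom ε f) {p : ℕ} (hp : p ≤ n) :
    IsZigZagFrom ε (Fin.take p hp f) :=
  fun i h => hf i (by omega)

theorem IsZigZagFrom.drop {f : Fin n → α} (hf : IsZigZagFrom ε f) (k : ℕ) :
    IsZigZagFrom (ε + k) (Fin.drop k f) := by
  intro i h
  obtain ⟨h₀, h₁⟩ := hf (k + i) (by omega)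
  exact ⟨fun hi => h₀ (by omega), fun hi => h₁ (by omega)⟩

theorem isZigZagFrom_iff_of_isBot {f : Fin n → α} {p : ℕ} (hp : p < n) (hpε : Even (p + ε))
    (hbot : IsBot (f ⟨p, hp⟩)) :
    IsZigZagFrom ε f ↔ IsZigZagFrom ε (Fin.take p hp.le f) ∧
      IsZigZagFrom (ε + (p + 1)) (Fin.drop (p + 1) f) := by
  rw [Nat.even_iff] at hpε
  refine ⟨fun hf => ⟨hf.take hp.le, hf.drop (p + 1)⟩, fun ⟨hpre, hsuf⟩ i h => ?_⟩
  rcases lt_trichotomy (i + 1) p with hi | rfl | hi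
  · exact hpre i hi
  · exact ⟨fun hi => by omega, fun _ => hbot _⟩
  rcases (Nat.lt_succ_iff.1 hi).eq_or_lt with rfl | hi
  · exact ⟨fun _ => hbot _, fun hi => by omega⟩
  obtain ⟨h₀, h₁⟩ := hsuf (i - (p + 1)) (by omega)
  have e₀ : (⟨p + 1 + (i - (p + 1)), by omega⟩ : Fin n) = ⟨i, by omega⟩ :=
    Fin.ext (by simp; omega)
  have e₁ : (⟨p + 1 + (i - (p + 1) + 1), by omega⟩ : Fin n) = ⟨i + 1, h⟩ :=
    Fin.ext (by simp; omega)
  simp only [Fin.drop, e₀, e₁] at h₀ h₁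
  exact ⟨fun hi => h₀ (by omega), fun hi => h₁ (by omega)⟩

end ZigZag

section Split

variable {α : Type*} {n p : ℕ}

def splitAtEquiv (hp : p < n) (a : α) :
    {w : Fin n → α // w ⟨p, hp⟩ = a} ≃ (Fin p → α) × (Fin (n - (p + 1)) → α) where
  toFun w := (Fin.take p hp.le w.1, Fin.drop (p + 1) w.1)
  invFun gh := ⟨fun i =>
      if h : (i : ℕ) < p then gh.1 ⟨i, h⟩
      else if h' : (i : ℕ) = p then a
      else gh.2 ⟨i - (p + 1), by omega⟩, by simp⟩
  left_inv := by
    rintro ⟨w, rfl⟩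
    ext i
    simp only [Fin.take_apply, Fin.drop]
    split_ifs with h₀ h₁
    · rfl
    · exact congrArg w (Fin.ext h₁.symm)
    · exact congrArg w (Fin.ext (by simp; omega))
  right_inv := by
    rintro ⟨g, h⟩
    ext i
    · simp
    · simp [Fin.drop, show ¬p + 1 + i < p by omega, show p + 1 + (i : ℕ) ≠ p by omega]

theorem card_eq_mul_of_split (hp : p < n) (a : α) {R : (Fin n → α) → Prop}
    (P : (Fin p → α) → Prop) (Q : (Fin (n - (p + 1)) → α) → Prop)
    (hR : ∀ w, R w ↔ w ⟨p, hp⟩ = a ∧ P (Fin.take p hp.le w) ∧ Q (Fin.drop (p + 1) w)) :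
    Nat.card {w // R w} = Nat.card {g // P g} * Nat.card {h // Q h} := by
  rw [← Nat.card_prod]
  exact Nat.card_congr <| (Equiv.subtypeEquivRight hR).trans <|
    (Equiv.subtypeSubtypeEquivSubtypeInter (fun w : Fin n → α => w ⟨p, hp⟩ = a) _).symm.trans <|
      (Equiv.subtypeEquiv (splitAtEquiv hp a) fun _ => Iff.rfl).trans Equiv.subtypeProdEquivProd

end Split

theorem card_isZigZagFrom (ε n m : ℕ) :
    Nat.card {f : Fin n → Fin m // IsZigZagFrom ε f} = zzOmega n m := by
  induction ε with
  | zero => exact Nat.card_coe_set_eq _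
  | succ ε ih =>
    rw [← ih]
    refine (Nat.card_congr <| Equiv.subtypeEquiv (Equiv.arrowCongr (.refl _) Fin.revPerm)
      fun f => ?_).symm
    exact (isZigZagFrom_add_one_comp_iff (fun _ _ => Fin.rev_le_rev) f).symm

theorem zzOmega_zero (m : ℕ) : zzOmega 0 m = 1 := by
  rw [← card_isZigZagFrom 0, Nat.card_eq_one_iff_unique]
  exact ⟨⟨fun f g => Subsingleton.elim _ _⟩, ⟨⟨finZeroElim, fun i h => by omega⟩⟩⟩

def isZigZagFromNeZeroEquiv (ε n m : ℕ) :
    {w : Fin n → Fin (m + 1) // IsZigZagFrom ε w ∧ ∀ j, w j ≠ 0} ≃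
      {g : Fin n → Fin m // IsZigZagFrom ε g} where
  toFun w := ⟨fun j => (w.1 j).pred (w.2.2 j),
    (isZigZagFrom_comp_iff (fun _ _ => Fin.succ_le_succ_iff) _).1 <| by
      simpa [Function.comp_def] using w.2.1⟩
  invFun g := ⟨Fin.succ ∘ g.1, (isZigZagFrom_comp_iff (fun _ _ => Fin.succ_le_succ_iff) _).2 g.2,
    fun _ => Fin.succ_ne_zero _⟩
  left_inv w := by ext; simp
  right_inv g := by ext; simp

theorem card_isZigZagFrom_forall_ne_zero (ε n m : ℕ) :
    Nat.card {w : Fin n → Fin (m + 1) // IsZigZagFrom ε w ∧ ∀ j, w j ≠ 0} = zzOmega n m := by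
  rw [Nat.card_congr (isZigZagFromNeZeroEquiv ε n m), card_isZigZagFrom]

theorem card_eq_card_forall_ne_add_sum {β : Type*} [Finite β] {n : ℕ}
    (P : (Fin n → β) → Prop) (b : β) :
    Nat.card {w // P w} = Nat.card {w // P w ∧ ∀ j, w j ≠ b} +
      ∑ p : Fin n, Nat.card {w // P w ∧ w p = b ∧ ∀ j < p, w j ≠ b} := by
  classical
  have := Fintype.ofFinite β
  let first (w : {w // P w}) : Option (Fin n) := Fin.find? fun i => w.1 i = b
  have fiber (o : Option (Fin n)) (Q : (Fin n → β) → Prop)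
      (hQ : ∀ w, (Fin.find? fun i => w i = b) = o ↔ Q w) :
      Nat.card {w // first w = o} = Nat.card {w // P w ∧ Q w} :=
    Nat.card_congr <| (Equiv.subtypeSubtypeEquivSubtypeInter P _).trans
      (Equiv.subtypeEquivRight fun w => and_congr_right fun _ => hQ w)
  rw [← Nat.card_congr (Equiv.sigmaFiberEquiv first), Nat.card_sigma, Fintype.sum_option,
    fiber none (fun w => ∀ j, w j ≠ b) fun w => by simp]
  congr 1
  exact Finset.sum_congr rfl fun p _ =>
    fiber (some p) (fun w => w p = b ∧ ∀ j < p, w j ≠ b) fun w => by simp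

theorem IsZigZagFrom.eq_zero_of_succ_eq_zero {ε n m : ℕ} {w : Fin n → Fin (m + 1)}
    (hw : IsZigZagFrom ε w) {i : ℕ} (h : i + 1 < n) (hi : Even (i + ε))
    (h0 : w ⟨i + 1, h⟩ = 0) : w ⟨i, by omega⟩ = 0 :=
  Fin.le_zero_iff.1 (h0 ▸ (hw i h).1 (Nat.even_iff.1 hi))

theorem IsZigZagFrom.succ_eq_zero_of_eq_zero {ε n m : ℕ} {w : Fin n → Fin (m + 1)}
    (hw : IsZigZagFrom ε w) {i : ℕ} (h : i + 1 < n) (hi : Odd (i + ε))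
    (h0 : w ⟨i, by omega⟩ = 0) : w ⟨i + 1, h⟩ = 0 :=
  Fin.le_zero_iff.1 (h0 ▸ (hw i h).2 (Nat.odd_iff.1 hi))

noncomputable def firstZeroCount (ε m : ℕ) {n : ℕ} (p : Fin n) : ℕ :=
  Nat.card {w : Fin n → Fin (m + 1) // IsZigZagFrom ε w ∧ w p = 0 ∧ ∀ j < p, w j ≠ 0}

theorem zzOmega_add_one_eq_add_sum (ε n m : ℕ) :
    zzOmega n (m + 1) = zzOmega n m + ∑ p : Fin n, firstZeroCount ε m p := by
  rw [← card_isZigZagFrom ε, card_eq_card_forall_ne_add_sum _ 0,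
    card_isZigZagFrom_forall_ne_zero]
  rfl

theorem firstZeroCount_of_even {ε m n : ℕ} {p : Fin n} (hp : Even (p + ε)) :
    firstZeroCount ε m p = zzOmega p m * zzOmega (n - (p + 1)) (m + 1) := by
  have hbot {w : Fin n → Fin (m + 1)} (h0 : w p = 0) : IsBot (w ⟨p, p.2⟩) :=
    h0 ▸ Fin.zero_le
  have key (w : Fin n → Fin (m + 1)) :
      (IsZigZagFrom ε w ∧ w p = 0 ∧ ∀ j < p, w j ≠ 0) ↔
        w ⟨p, p.2⟩ = 0 ∧
          (IsZigZagFrom ε (Fin.take p p.2.le w) ∧ ∀ j, Fin.take p p.2.le w j ≠ 0) ∧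
          IsZigZagFrom (ε + (p + 1)) (Fin.drop (p + 1) w) := by
    constructor
    · rintro ⟨hw, h0, hne⟩
      rw [isZigZagFrom_iff_of_isBot p.2 hp (hbot h0)] at hw
      exact ⟨h0, ⟨hw.1, fun j => hne _ j.2⟩, hw.2⟩
    · rintro ⟨h0, ⟨hpre, hne⟩, hsuf⟩
      exact ⟨(isZigZagFrom_iff_of_isBot p.2 hp (hbot h0)).2 ⟨hpre, hsuf⟩, h0,
        fun j hj => hne ⟨j, hj⟩⟩
  rw [firstZeroCount, card_eq_mul_of_split p.2 0 (fun g => IsZigZagFrom ε g ∧ ∀ j, g j ≠ 0) _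
    key, card_isZigZagFrom_forall_ne_zero, card_isZigZagFrom]

theorem firstZeroCount_of_odd {ε m n : ℕ} {p : Fin n} (hp : Odd (p + ε))
    (hp0 : (p : ℕ) ≠ 0) : firstZeroCount ε m p = 0 := by
  obtain ⟨k, hk⟩ := Nat.exists_eq_succ_of_ne_zero hp0
  have hkε : Even (k + ε) := Nat.even_iff.2 (by rw [Nat.odd_iff] at hp; omega)
  refine Nat.card_eq_zero.2 (.inl ⟨fun ⟨w, hw, h0, hne⟩ => ?_⟩)
  have hwk : w ⟨k + 1, by omega⟩ = 0 := h0 ▸ congrArg w (Fin.ext hk.symm)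
  exact hne ⟨k, by omega⟩ (by simp [Fin.lt_def, hk]) (hw.eq_zero_of_succ_eq_zero _ hkε hwk)

theorem firstZeroCount_zero_of_odd {ε m n : ℕ} (hε : Odd ε) :
    firstZeroCount ε m (0 : Fin (n + 2)) = zzOmega n (m + 1) := by
  have hbot {w : Fin (n + 2) → Fin (m + 1)} (h1 : w 1 = 0) : IsBot (w ⟨1, by omega⟩) :=
    h1 ▸ Fin.zero_le
  have h1ε : Even (1 + ε) := by rw [add_comm]; exact hε.add_one
  have key (w : Fin (n + 2) → Fin (m + 1)) :
      (IsZigZagFrom ε w ∧ w 0 = 0 ∧ ∀ j < 0, w j ≠ 0) ↔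
        w ⟨1, by omega⟩ = 0 ∧ Fin.take 1 (by omega) w = 0 ∧
          IsZigZagFrom (ε + (1 + 1)) (Fin.drop (1 + 1) w) := by
    constructor
    · rintro ⟨hw, h0, -⟩
      have h1 : w 1 = 0 := hw.succ_eq_zero_of_eq_zero (i := 0) (by omega) (by simpa) h0
      refine ⟨h1, funext fun j => ?_, ((isZigZagFrom_iff_of_isBot _ h1ε (hbot h1)).1 hw).2⟩
      rw [Subsingleton.elim j 0]
      exact h0
    · rintro ⟨h1, h0, hsuf⟩
      refine ⟨(isZigZagFrom_iff_of_isBot _ h1ε (hbot h1)).2 ⟨fun i h => by omega, hsuf⟩,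
        congrFun h0 0, fun j hj => absurd hj (Fin.not_lt_zero j)⟩
  rw [firstZeroCount, card_eq_mul_of_split _ 0 (· = 0) _ key, card_isZigZagFrom]
  simp

theorem sum_range_neg_one_pow_mul_zzOmega {R : Type*} [CommRing R] (n m : ℕ) :
    ∑ p ∈ Finset.range (n + 2), (-1 : R) ^ p * zzOmega p m * zzOmega (n + 1 - p) (m + 1) =
      zzOmega n (m + 1) := by
  have hsum :
      ∑ p : Fin (n + 2), firstZeroCount 0 m p = ∑ p : Fin (n + 2), firstZeroCount 1 m p := by
    have h₀ := zzOmega_add_one_eq_add_sum 0 (n + 2) m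
    have h₁ := zzOmega_add_one_eq_add_sum 1 (n + 2) m
    omega
  have hterm (p : Fin (n + 2)) :
      (-1 : R) ^ (p : ℕ) * zzOmega p m * zzOmega (n + 1 - p) (m + 1) =
        firstZeroCount 0 m p - firstZeroCount 1 m p +
          if p = 0 then (zzOmega n (m + 1) : R) else 0 := by
    have hlen : n + 2 - (p + 1) = n + 1 - p := by omega
    rcases Nat.even_or_odd p with hp | hp
    · rw [firstZeroCount_of_even (by simpa), hp.neg_one_pow, hlen]
      rcases eq_or_ne p 0 with rfl | hp0
      · simp [firstZeroCount_zero_of_odd odd_one]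
      · rw [firstZeroCount_of_odd (by simpa using hp.add_one) (Fin.val_ne_zero_iff.2 hp0),
          if_neg hp0]
        simp
    · have hp0 : p ≠ 0 := by rintro rfl; simp at hp
      rw [firstZeroCount_of_odd (by simpa) (Fin.val_ne_zero_iff.2 hp0),
        firstZeroCount_of_even (by simpa using hp.add_one), hp.neg_one_pow, hlen, if_neg hp0]
      simp
  rw [← Fin.sum_univ_eq_sum_range
      (fun p => (-1 : R) ^ p * zzOmega p m * zzOmega (n + 1 - p) (m + 1)),
    Finset.sum_congr rfl fun p _ => hterm p, Finset.sum_add_distrib, Finset.sum_sub_distrib,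
    ← Nat.cast_sum, ← Nat.cast_sum, hsum, sub_self, zero_add, Fintype.sum_ite_eq']

/-- for `m ≥ 2`, `F_m(y) · (F_{m-1}(-y) - y) = 1`, where `F_{m-1}(-y)` is
the substitution `y ↦ -y`, i.e. the series `Σ_{n≥0} (-1)ⁿ Ω_n(m-1) yⁿ`. -/
theorem zzF_rec_neg (m : ℕ) (hm : 2 ≤ m) :
    zzF m * ((PowerSeries.mk fun n => ((-1 : ℚ) ^ n * zzOmega n (m - 1))) -
      PowerSeries.X) = 1 := by
  obtain ⟨m, rfl⟩ : ∃ k, m = k + 1 := ⟨m - 1, by omega⟩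
  ext (_ | n)
  · simp [zzF, zzOmega_zero]
  · rw [mul_sub, mul_comm, mul_comm _ PowerSeries.X, map_sub, PowerSeries.coeff_succ_X_mul,
      PowerSeries.coeff_mul, Finset.Nat.sum_antidiagonal_eq_sum_range_succ_mk]
    simp only [zzF, PowerSeries.coeff_mk, add_tsub_cancel_right]
    rw [sum_range_neg_one_pow_mul_zzOmega, sub_self, PowerSeries.coeff_one, if_neg n.succ_ne_zero]
end

section
/- Define the refined order polynomial Ω_n(p,q;m) = Σ_f p^{f(1)} q^{m+1−f(1)}, where the sum is over sequences f = (f(1),…,f(n)) ∈ {1,…,m}^n with f(1) ≤ f(2) ≥ f(3) ≤ ⋯, and Ω_0(p,q;m) = p q^m. Then for all n ≥ 0 and m ≥ 1, as polynomials: (p − q)·Ω_{n+1}(p,q;m) = p·(Ω_n(q,p;m) − Ω_n(q,q;m)). -/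
open Classical in
/-- The refined order polynomial `Ω_n(p,q;m) = Σ_f p^{f(1)} q^{m+1-f(1)}`, summed over
the zig-zag sequences `f ∈ {1,…,m}ⁿ` with `f(1) ≤ f(2) ≥ f(3) ≤ ⋯`; by convention
`Ω_0(p,q;m) = p·qᵐ`. (Entries of `Fin m` are 0-indexed, so the 1-indexed first entry is
`(f 0).val + 1`.) -/
noncomputable def refOmega {R : Type*} [CommRing R] (p q : R) (n m : ℕ) : R :=
  if h : n = 0 then p * q ^ m
  else ∑ f : Fin n → Fin m,
    if IsZigZagSeq f then
      p ^ ((f ⟨0, Nat.pos_of_ne_zero h⟩).val + 1) *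
        q ^ (m - (f ⟨0, Nat.pos_of_ne_zero h⟩).val)
    else 0

/-- Reverse zig-zag: `f(1) ≥ f(2) ≤ f(3) ≥ ⋯`. -/
def IsRevZigZag {n m : ℕ} (f : Fin n → Fin m) : Prop :=
  ∀ (i : ℕ) (h : i + 1 < n),
    (i % 2 = 0 → f ⟨i + 1, h⟩ ≤ f ⟨i, Nat.lt_of_succ_lt h⟩) ∧
    (i % 2 = 1 → f ⟨i, Nat.lt_of_succ_lt h⟩ ≤ f ⟨i + 1, h⟩)

lemma zz_rev {n m : ℕ} (f : Fin n → Fin m) :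
    IsZigZagSeq (fun i => (f i).rev) ↔ IsRevZigZag f := by
  unfold IsZigZagSeq IsRevZigZag
  simp only [Fin.rev_le_rev]

lemma cons_zz {n m : ℕ} (a : Fin m) (g : Fin (n + 1) → Fin m) :
    IsZigZagSeq (Fin.cons a g : Fin (n + 2) → Fin m) ↔ a ≤ g 0 ∧ IsRevZigZag g := by
  constructor
  · intro H
    refine ⟨?_, ?_⟩
    · have h0 := (H 0 (by omega)).1 rfl
      have e1 : (Fin.cons a g : Fin (n + 2) → Fin m) ⟨0, by omega⟩ = a := rfl
      have e2 : (Fin.cons a g : Fin (n + 2) → Fin m) ⟨1, by omega⟩ = g 0 := rfl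
      rw [e1, e2] at h0
      exact h0
    · intro i h
      have H2 := H (i + 1) (by omega)
      have e1 : (Fin.cons a g : Fin (n + 2) → Fin m) ⟨i + 1, by omega⟩
          = g ⟨i, Nat.lt_of_succ_lt h⟩ := rfl
      have e2 : (Fin.cons a g : Fin (n + 2) → Fin m) ⟨i + 2, by omega⟩ = g ⟨i + 1, h⟩ := rfl
      rw [e1, e2] at H2
      refine ⟨fun hp => H2.2 (by omega), fun hp => H2.1 (by omega)⟩
  · rintro ⟨h0, H⟩ i h
    match i, h with
    | 0, h =>
      refine ⟨fun _ => ?_, fun hp => by omega⟩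
      have e1 : (Fin.cons a g : Fin (n + 2) → Fin m) ⟨0, by omega⟩ = a := rfl
      have e2 : (Fin.cons a g : Fin (n + 2) → Fin m) ⟨1, by omega⟩ = g 0 := rfl
      rw [e1, e2]
      exact h0
    | (i + 1), h =>
      have H2 := H i (by omega)
      have e1 : (Fin.cons a g : Fin (n + 2) → Fin m) ⟨i + 1, by omega⟩
          = g ⟨i, by omega⟩ := rfl
      have e2 : (Fin.cons a g : Fin (n + 2) → Fin m) ⟨i + 2, by omega⟩ = g ⟨i + 1, by omega⟩ := rfl
      rw [e1, e2]
      refine ⟨fun hp => H2.2 (by omega), fun hp => H2.1 (by omega)⟩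

/-- Telescoping identity in ℕ-range form. -/
lemma tele0 {R : Type*} [CommRing R] (p q : R) (m : ℕ) :
    ∀ b, b < m →
      (p - q) * ∑ i ∈ Finset.range (b + 1), p ^ (i + 1) * q ^ (m - i)
        = p * (p ^ (b + 1) * q ^ (m - b)) - p * q ^ (m + 1) := by
  intro b
  induction b with
  | zero =>
    intro hb
    rw [Finset.sum_range_one, Nat.sub_zero]
    have h1 : m = (m - 1) + 1 := by omega
    have h2 : q ^ (m + 1) = q ^ m * q := pow_succ q m
    rw [h2]
    ring
  | succ b IH =>
    intro hb
    rw [Finset.sum_range_succ, mul_add, IH (by omega)]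
    have hk : m - b = (m - (b + 1)) + 1 := by omega
    rw [hk, pow_succ q]
    ring

open Classical in
/-- Telescoping for the inner sum over first entries `a ≤ b`. -/
lemma tele {R : Type*} [CommRing R] (p q : R) (m : ℕ) (b : Fin m) :
    (p - q) * ∑ a : Fin m, (if a ≤ b then p ^ (a.val + 1) * q ^ (m - a.val) else 0)
      = p * (p ^ (b.val + 1) * q ^ (m - b.val)) - p * q ^ (m + 1) := by
  have h1 : ∑ a : Fin m, (if a ≤ b then p ^ (a.val + 1) * q ^ (m - a.val) else 0)
      = ∑ i ∈ Finset.range m, (if i ≤ b.val then p ^ (i + 1) * q ^ (m - i) else 0) := by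
    rw [← Fin.sum_univ_eq_sum_range (fun i => if i ≤ b.val then p ^ (i + 1) * q ^ (m - i) else 0) m]
    refine Finset.sum_congr rfl fun a _ => ?_
    exact if_congr Fin.le_def rfl rfl
  have h2 : ∑ i ∈ Finset.range m, (if i ≤ b.val then p ^ (i + 1) * q ^ (m - i) else 0)
      = ∑ i ∈ Finset.range (b.val + 1), p ^ (i + 1) * q ^ (m - i) := by
    rw [← Finset.sum_filter]
    refine Finset.sum_congr ?_ fun _ _ => rfl
    ext i
    simp only [Finset.mem_filter, Finset.mem_range]
    have := b.isLt
    omega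
  rw [h1, h2, tele0 p q m b.val b.isLt]

/-- for all `n ≥ 0` and `m ≥ 1`, as polynomials (equivalently, for all
values `p, q` in any commutative ring):
`(p - q)·Ω_{n+1}(p,q;m) = p·(Ω_n(q,p;m) - Ω_n(q,q;m))`. -/
theorem refOmega_recurrence {R : Type*} [CommRing R] (p q : R) (n m : ℕ) (hm : 1 ≤ m) :
    (p - q) * refOmega p q (n + 1) m =
      p * (refOmega q p n m - refOmega q q n m) := by
  classical
  obtain ⟨k, rfl⟩ : ∃ k, m = k + 1 := ⟨m - 1, by omega⟩
  rcases n with _ | n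
  · -- n = 0 : Ω₁ is a full sum over Fin (k+1)
    simp only [Nat.zero_add]
    rw [refOmega, refOmega, refOmega, dif_neg (by omega : ¬(1 = 0)),
      dif_pos rfl, dif_pos rfl]
    have hzz : ∀ f : Fin 1 → Fin (k + 1), IsZigZagSeq f := by
      intro f i h; omega
    have h1 : (∑ f : Fin 1 → Fin (k + 1),
        if IsZigZagSeq f then
          p ^ ((f ⟨0, by omega⟩).val + 1) * q ^ (k + 1 - (f ⟨0, by omega⟩).val) else 0)
        = ∑ a : Fin (k + 1), p ^ (a.val + 1) * q ^ (k + 1 - a.val) := by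
      refine (Fintype.sum_equiv (Equiv.funUnique (Fin 1) (Fin (k + 1))).symm _ _ fun f => ?_).symm
      rw [if_pos (hzz _)]
      rfl
    rw [h1, Fin.sum_univ_eq_sum_range (fun i => p ^ (i + 1) * q ^ (k + 1 - i)) (k + 1),
      tele0 p q (k + 1) k (by omega)]
    have e1 : k + 1 - k = 1 := by omega
    rw [e1, pow_one, pow_succ q (k + 1)]
    ring
  · -- n = n + 1 : length n + 2
    rw [refOmega, refOmega, refOmega, dif_neg (Nat.succ_ne_zero _),
      dif_neg (Nat.succ_ne_zero _), dif_neg (Nat.succ_ne_zero _)]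
    -- Step A: decompose the (n+2)-sum as head + tail (reverse zigzag)
    have stepA : (∑ f : Fin (n + 2) → Fin (k + 1),
        if IsZigZagSeq f then
          p ^ ((f ⟨0, by omega⟩).val + 1) * q ^ (k + 1 - (f ⟨0, by omega⟩).val) else 0)
        = ∑ g : Fin (n + 1) → Fin (k + 1),
            if IsRevZigZag g then
              (∑ a : Fin (k + 1), if a ≤ g 0 then p ^ (a.val + 1) * q ^ (k + 1 - a.val) else 0)
            else 0 := by
      rw [← Fintype.sum_equiv (Fin.consEquiv fun _ : Fin (n + 2) => Fin (k + 1))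
        (fun x => if IsZigZagSeq (Fin.cons x.1 x.2 : Fin (n + 2) → Fin (k + 1)) then
          p ^ (((Fin.cons x.1 x.2 : Fin (n + 2) → Fin (k + 1)) ⟨0, by omega⟩).val + 1) *
            q ^ (k + 1 - ((Fin.cons x.1 x.2 : Fin (n + 2) → Fin (k + 1)) ⟨0, by omega⟩).val)
          else 0)
        _ (fun x => rfl)]
      rw [Fintype.sum_prod_type, Finset.sum_comm]
      refine Finset.sum_congr rfl fun g _ => ?_
      have hcons0 : ∀ a : Fin (k + 1),
          (Fin.cons a g : Fin (n + 2) → Fin (k + 1)) ⟨0, by omega⟩ = a := fun _ => rfl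
      by_cases hg : IsRevZigZag g
      · rw [if_pos hg]
        refine Finset.sum_congr rfl fun a _ => ?_
        rw [hcons0 a]
        by_cases ha : a ≤ g 0
        · rw [if_pos ((cons_zz a g).2 ⟨ha, hg⟩), if_pos ha]
        · rw [if_neg (fun h => ha ((cons_zz a g).1 h).1), if_neg ha]
      · rw [if_neg hg]
        refine Finset.sum_eq_zero fun a _ => ?_
        exact if_neg (fun h => hg ((cons_zz a g).1 h).2)
    rw [stepA]
    -- Step B: rewrite both RHS sums as sums over reverse zigzags
    have stepB1 : (∑ f : Fin (n + 1) → Fin (k + 1),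
        if IsZigZagSeq f then
          q ^ ((f ⟨0, by omega⟩).val + 1) * p ^ (k + 1 - (f ⟨0, by omega⟩).val) else 0)
        = ∑ g : Fin (n + 1) → Fin (k + 1),
            if IsRevZigZag g then
              p ^ ((g 0).val + 1) * q ^ (k + 1 - (g 0).val) else 0 := by
      refine (Fintype.sum_equiv
        (Equiv.arrowCongr (Equiv.refl (Fin (n + 1))) (Fin.revPerm)) _ _ fun g => ?_).symm
      have he : (Equiv.arrowCongr (Equiv.refl (Fin (n + 1))) (Fin.revPerm)) g
          = fun i => (g i).rev := by
        funext i; simp [Equiv.arrowCongr]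
      rw [he]
      by_cases hg : IsRevZigZag g
      · rw [if_pos hg, if_pos ((zz_rev g).2 hg)]
        have hi : ((fun i => (g i).rev) (⟨0, by omega⟩ : Fin (n + 1))) = (g 0).rev := rfl
        rw [hi, Fin.val_rev]
        have hlt := (g 0).isLt
        have e1 : k + 1 - ((g 0).val + 1) + 1 = k + 1 - (g 0).val := by omega
        have e2 : k + 1 - (k + 1 - ((g 0).val + 1)) = (g 0).val + 1 := by omega
        rw [e1, e2, mul_comm]
      · rw [if_neg hg, if_neg (fun h => hg ((zz_rev g).1 h))]
    have stepB2 : (∑ f : Fin (n + 1) → Fin (k + 1),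
        if IsZigZagSeq f then
          q ^ ((f ⟨0, by omega⟩).val + 1) * q ^ (k + 1 - (f ⟨0, by omega⟩).val) else 0)
        = ∑ g : Fin (n + 1) → Fin (k + 1),
            if IsRevZigZag g then q ^ (k + 1 + 1) else 0 := by
      refine (Fintype.sum_equiv
        (Equiv.arrowCongr (Equiv.refl (Fin (n + 1))) (Fin.revPerm)) _ _ fun g => ?_).symm
      have he : (Equiv.arrowCongr (Equiv.refl (Fin (n + 1))) (Fin.revPerm)) g
          = fun i => (g i).rev := by
        funext i; simp [Equiv.arrowCongr]
      rw [he]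
      by_cases hg : IsRevZigZag g
      · rw [if_pos hg, if_pos ((zz_rev g).2 hg)]
        rw [← pow_add]
        congr 1
        have := ((fun i => (g i).rev) (⟨0, by omega⟩ : Fin (n + 1))).isLt
        omega
      · rw [if_neg hg, if_neg (fun h => hg ((zz_rev g).1 h))]
    rw [stepB1, stepB2]
    -- Final assembly
    rw [Finset.mul_sum, ← Finset.sum_sub_distrib, Finset.mul_sum]
    refine Finset.sum_congr rfl fun g _ => ?_
    by_cases hg : IsRevZigZag g
    · rw [if_pos hg, if_pos hg, if_pos hg, tele p q (k + 1) (g 0)]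
      ring
    · rw [if_neg hg, if_neg hg, if_neg hg]
      ring
end

section
/- For n ≥ 2, the set U_{n+1,1} of up-down alternating permutations u ∈ S_{n+1} with u(1) = 1 is in bijection with the set of down-up alternating permutations of S_n, via u ↦ (u(2)−1, u(3)−1, …, u(n+1)−1); moreover, this bijection sends the big-return set of u to the big-return set of the image, so the distribution of the number of big returns over U_{n+1,1} equals the distribution of big returns over down-up alternating permutations of S_n. -/
/-- `v` is a down-up alternating permutation: `v(1) > v(2) < v(3) > ⋯`. -/
def IsDownUpAlt {n : ℕ} (u : Equiv.Perm (Fin n)) : Prop :=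
  ∀ (i : ℕ) (h : i + 1 < n),
    (i % 2 = 0 → u ⟨i + 1, h⟩ < u ⟨i, Nat.lt_of_succ_lt h⟩) ∧
    (i % 2 = 1 → u ⟨i, Nat.lt_of_succ_lt h⟩ < u ⟨i + 1, h⟩)

/-- The set of big returns of `w`: (0-indexed) values `j` with `w⁻¹(j) > w⁻¹(j+1) + 1`. -/
def bigRetSet {n : ℕ} (w : Equiv.Perm (Fin n)) : Set ℕ :=
  {j | ∃ h : j + 1 < n, (w⁻¹ ⟨j + 1, h⟩).val + 1 < (w⁻¹ ⟨j, Nat.lt_of_succ_lt h⟩).val}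

/-!
Removing the initial value `1` from `u ∈ U_{n+1,1}` and lowering the other values by one inverts
`Equiv.Perm.consZero`, which extends `v ∈ S_n` to `S_{n+1}` by fixing `0` and shifting everything
else up by one. As `u(1) = 1` is the minimum, the first ascent of `u` is automatic and its remaining
ascents and descents are those of `v`, at positions of the opposite parity. The inverse of
`consZero v` is `consZero v⁻¹`, so the big returns of `consZero v` are those of `v` shifted up by
one, and `0` is never one because `0` stays in place.
-/
namespace Equiv.Perm

variable {n : ℕ}

def consZero (v : Perm (Fin n)) : Perm (Fin (n + 1)) :=
  decomposeFin.symm (0, v)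

@[simp]
theorem consZero_zero (v : Perm (Fin n)) : consZero v 0 = 0 :=
  decomposeFin_symm_apply_zero 0 v

@[simp]
theorem consZero_succ (v : Perm (Fin n)) (i : Fin n) : consZero v i.succ = (v i).succ := by
  simp [consZero, decomposeFin_symm_apply_succ]

theorem consZero_mk_succ (v : Perm (Fin n)) (k : ℕ) (h : k + 1 < n + 1) :
    consZero v ⟨k + 1, h⟩ = (v ⟨k, Nat.lt_of_succ_lt_succ h⟩).succ :=
  consZero_succ v ⟨k, _⟩

theorem consZero_inv (v : Perm (Fin n)) : (consZero v)⁻¹ = consZero v⁻¹ := by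
  refine inv_eq_of_mul_eq_one_right (ext fun x => ?_)
  cases x using Fin.cases <;> simp

theorem consZero_decomposeFin_snd {u : Perm (Fin (n + 1))} (hu : u 0 = 0) :
    consZero (decomposeFin u).2 = u := by
  have hfst : (decomposeFin u).1 = 0 := by
    rw [← hu]
    conv_rhs => rw [← decomposeFin.symm_apply_apply u]
    exact (decomposeFin_symm_apply_zero _ _).symm
  rw [consZero, ← hfst, Prod.mk.eta, Equiv.symm_apply_apply]

def consZeroEquiv {P : Perm (Fin (n + 1)) → Prop} {Q : Perm (Fin n) → Prop}
    (h : ∀ v, P (consZero v) ↔ Q v) : {v // Q v} ≃ {u // P u ∧ u 0 = 0} where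
  toFun v := ⟨consZero v.1, (h v.1).2 v.2, consZero_zero v.1⟩
  invFun u := ⟨(decomposeFin u.1).2, (h _).1 (by rw [consZero_decomposeFin_snd u.2.2]; exact u.2.1)⟩
  left_inv v := Subtype.ext (congrArg Prod.snd (decomposeFin.apply_symm_apply (0, v.1)))
  right_inv u := Subtype.ext (consZero_decomposeFin_snd u.2.2)

theorem consZero_consZeroEquiv_symm {P : Perm (Fin (n + 1)) → Prop} {Q : Perm (Fin n) → Prop}
    (h : ∀ v, P (consZero v) ↔ Q v) (u : {u // P u ∧ u 0 = 0}) :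
    consZero ((consZeroEquiv h).symm u).1 = u.1 :=
  congrArg Subtype.val ((consZeroEquiv h).apply_symm_apply u)

theorem consZero_succ_lt_succ_iff (v : Perm (Fin n)) (i j : Fin n) :
    consZero v i.succ < consZero v j.succ ↔ v i < v j := by
  simp

theorem isUpDownAlt_consZero_iff (v : Perm (Fin n)) : IsUpDownAlt (consZero v) ↔ IsDownUpAlt v := by
  refine ⟨fun hu i hi => ?_, fun hv i hi => ?_⟩
  · obtain ⟨hasc, hdesc⟩ := hu (i + 1) (by omega)
    exact ⟨fun hi2 => (consZero_succ_lt_succ_iff v ⟨i + 1, hi⟩ ⟨i, by omega⟩).1 (hdesc (by omega)),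
      fun hi2 => (consZero_succ_lt_succ_iff v ⟨i, by omega⟩ ⟨i + 1, hi⟩).1 (hasc (by omega))⟩
  · cases i with
    | zero => exact ⟨fun _ => (consZero_zero v).symm ▸ Fin.succ_pos _, by omega⟩
    | succ i =>
      obtain ⟨hdesc, hasc⟩ := hv i (by omega)
      exact ⟨fun hi2 => (consZero_succ_lt_succ_iff v ⟨i, by omega⟩ ⟨i + 1, by omega⟩).2
          (hasc (by omega)),
        fun hi2 => (consZero_succ_lt_succ_iff v ⟨i + 1, by omega⟩ ⟨i, by omega⟩).2
          (hdesc (by omega))⟩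

theorem bigRetSet_consZero (v : Perm (Fin n)) :
    bigRetSet (consZero v) = Nat.succ '' bigRetSet v := by
  ext j
  cases j with
  | zero => simp [bigRetSet, consZero_inv]
  | succ j =>
    simp only [Nat.succ_injective.mem_set_image, bigRetSet, Set.mem_ofPred_eq, consZero_inv,
      consZero_mk_succ, Fin.val_succ]
    constructor <;> rintro ⟨h, hlt⟩ <;> exact ⟨by omega, by omega⟩

theorem ncard_bigRetSet_consZero (v : Perm (Fin n)) :
    (bigRetSet (consZero v)).ncard = (bigRetSet v).ncard := by
  rw [bigRetSet_consZero, Set.ncard_image_of_injective _ Nat.succ_injective]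

end Equiv.Perm

open Equiv.Perm

theorem updown_first_one_bijection_general (n : ℕ) :
    (∃ Φ : {u : Equiv.Perm (Fin (n + 1)) //
              IsUpDownAlt u ∧ u ⟨0, n.succ_pos⟩ = ⟨0, n.succ_pos⟩} ≃
            {v : Equiv.Perm (Fin n) // IsDownUpAlt v},
      ∀ u, (∀ i : Fin n,
              ((Φ u : Equiv.Perm (Fin n)) i).val + 1 =
                ((u : Equiv.Perm (Fin (n + 1))) i.succ).val) ∧
        (∀ j : ℕ, j + 1 ∈ bigRetSet (u : Equiv.Perm (Fin (n + 1))) ↔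
            j ∈ bigRetSet (Φ u : Equiv.Perm (Fin n))) ∧
        0 ∉ bigRetSet (u : Equiv.Perm (Fin (n + 1)))) ∧
    (∀ k : ℕ,
      Set.ncard {u : Equiv.Perm (Fin (n + 1)) |
          IsUpDownAlt u ∧ u ⟨0, n.succ_pos⟩ = ⟨0, n.succ_pos⟩ ∧
          (bigRetSet u).ncard = k} =
      Set.ncard {v : Equiv.Perm (Fin n) |
          IsDownUpAlt v ∧ (bigRetSet v).ncard = k}) := by
  let Φ : {u : Equiv.Perm (Fin (n + 1)) // IsUpDownAlt u ∧ u ⟨0, n.succ_pos⟩ = ⟨0, n.succ_pos⟩} ≃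
      {v : Equiv.Perm (Fin n) // IsDownUpAlt v} :=
    (consZeroEquiv isUpDownAlt_consZero_iff).symm
  refine ⟨⟨Φ, fun u => ?_⟩, fun k => ?_⟩
  · have hu : consZero (Φ u).1 = u.1 := consZero_consZeroEquiv_symm isUpDownAlt_consZero_iff u
    refine ⟨fun i => ?_, fun j => ?_, ?_⟩
    · rw [← hu, consZero_succ, Fin.val_succ]
    · rw [← hu, bigRetSet_consZero, Nat.succ_injective.mem_set_image]
    · rw [← hu, bigRetSet_consZero]
      exact fun ⟨_, _, h⟩ => Nat.succ_ne_zero _ h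
  · have hk (v : Equiv.Perm (Fin n)) :
        IsUpDownAlt (consZero v) ∧ (bigRetSet (consZero v)).ncard = k ↔
          IsDownUpAlt v ∧ (bigRetSet v).ncard = k := by
      rw [isUpDownAlt_consZero_iff, ncard_bigRetSet_consZero]
    rw [← Nat.card_coe_set_eq, ← Nat.card_coe_set_eq]
    exact Nat.card_congr ((Equiv.subtypeEquivRight fun u => and_left_comm.trans and_comm).trans
      (consZeroEquiv hk).symm)

/-- for `n ≥ 2`, the set `U_{n+1,1}` of up-down alternating permutations
`u ∈ S_{n+1}` with `u(1) = 1` is in bijection with the down-up alternating permutations of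
`S_n`, via `u ↦ (u(2)-1, …, u(n+1)-1)`; the bijection sends the big-return set of `u`
(shifted by one) to the big-return set of the image, so the distribution of the number of
big returns over `U_{n+1,1}` equals that over down-up alternating permutations of `S_n`. -/
theorem updown_first_one_bijection (n : ℕ) (hn : 2 ≤ n) :
    (∃ Φ : {u : Equiv.Perm (Fin (n + 1)) //
              IsUpDownAlt u ∧ u ⟨0, n.succ_pos⟩ = ⟨0, n.succ_pos⟩} ≃
            {v : Equiv.Perm (Fin n) // IsDownUpAlt v},
      ∀ u, (∀ i : Fin n,
              ((Φ u : Equiv.Perm (Fin n)) i).val + 1 =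
                ((u : Equiv.Perm (Fin (n + 1))) i.succ).val) ∧
        (∀ j : ℕ, j + 1 ∈ bigRetSet (u : Equiv.Perm (Fin (n + 1))) ↔
            j ∈ bigRetSet (Φ u : Equiv.Perm (Fin n))) ∧
        0 ∉ bigRetSet (u : Equiv.Perm (Fin (n + 1)))) ∧
    (∀ k : ℕ,
      Set.ncard {u : Equiv.Perm (Fin (n + 1)) |
          IsUpDownAlt u ∧ u ⟨0, n.succ_pos⟩ = ⟨0, n.succ_pos⟩ ∧
          (bigRetSet u).ncard = k} =
      Set.ncard {v : Equiv.Perm (Fin n) |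
          IsDownUpAlt v ∧ (bigRetSet v).ncard = k}) :=
  updown_first_one_bijection_general n
end

section
/- For n ≥ 2, the map v ↦ u where u = (n, n+1, v(1), v(2), …, v(n−1)) is a bijection from up-down alternating permutations of S_{n−1} to the set of up-down alternating permutations u ∈ S_{n+1} with u(1) = n, and the number of big returns satisfies ret₁(u) = 1 + ret₁(v). -/
open Equiv

section bigRetSet

variable {n : ℕ} {w : Perm (Fin n)} {j : ℕ}

theorem lt_of_mem_bigRetSet (hj : j ∈ bigRetSet w) : j + 1 < n :=
  hj.1

theorem mem_bigRetSet_iff (h : j + 1 < n) :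
    j ∈ bigRetSet w ↔ (w⁻¹ ⟨j + 1, h⟩).val + 1 < (w⁻¹ ⟨j, by omega⟩).val :=
  ⟨fun ⟨_, hj⟩ => hj, fun hj => ⟨h, hj⟩⟩

theorem bigRetSet_finite (w : Perm (Fin n)) : (bigRetSet w).Finite :=
  (Set.finite_Iio n).subset fun _ hj => Set.mem_Iio.2 (by have := lt_of_mem_bigRetSet hj; omega)

end bigRetSet

/-- The permutation `(k, k+1, v(0), …, v(k-1))` of `Fin (k + 2)`, in one-line notation. -/
def prependTopTwo {k : ℕ} (v : Perm (Fin k)) : Perm (Fin (k + 2)) :=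
  (finCongr (Nat.add_comm k 2)).trans <| finSumFinEquiv.symm.trans <|
    (sumComm _ _).trans <| (sumCongr v (Equiv.refl _)).trans finSumFinEquiv

section prependTopTwo

variable {k : ℕ} (v : Perm (Fin k))

theorem prependTopTwo_apply_of_lt_two (i : ℕ) (h : i < 2) :
    (prependTopTwo v ⟨i, by omega⟩).val = k + i := by
  have : (⟨i, by omega⟩ : Fin (k + 2)) = Fin.cast (Nat.add_comm 2 k) (Fin.castAdd k ⟨i, h⟩) :=
    rfl
  rw [this]
  simp only [prependTopTwo, trans_apply, finCongr_apply, Fin.cast_cast, Fin.cast_eq_self,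
    finSumFinEquiv_symm_apply_castAdd, sumComm_apply, Sum.swap_inl, sumCongr_apply, Sum.map_inr,
    refl_apply, finSumFinEquiv_apply_right, Fin.val_natAdd]

theorem prependTopTwo_apply_add_two (i : ℕ) (h : i + 2 < k + 2) :
    (prependTopTwo v ⟨i + 2, h⟩).val = (v ⟨i, by omega⟩).val := by
  have : (⟨i + 2, h⟩ : Fin (k + 2)) = Fin.cast (Nat.add_comm 2 k) (Fin.natAdd 2 ⟨i, by omega⟩) :=
    Fin.ext (Nat.add_comm _ _)
  rw [this]
  simp only [prependTopTwo, trans_apply, finCongr_apply, Fin.cast_cast, Fin.cast_eq_self,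
    finSumFinEquiv_symm_apply_natAdd, sumComm_apply, Sum.swap_inr, sumCongr_apply, Sum.map_inl,
    finSumFinEquiv_apply_left, Fin.val_castAdd]

theorem prependTopTwo_inv_apply_of_lt (j : ℕ) (hj : j < k) :
    ((prependTopTwo v)⁻¹ ⟨j, by omega⟩).val = (v⁻¹ ⟨j, hj⟩).val + 2 := by
  have : (⟨j, by omega⟩ : Fin (k + 2)) = Fin.castAdd 2 ⟨j, hj⟩ := rfl
  rw [this]
  simp only [prependTopTwo, Perm.inv_def, symm_trans_apply, finSumFinEquiv_symm_apply_castAdd,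
    symm_symm, sumCongr_symm, sumCongr_apply, Sum.map_inl, sumComm_symm, sumComm_apply,
    Sum.swap_inl, finSumFinEquiv_apply_right, finCongr_symm, finCongr_apply, Fin.val_cast,
    Fin.val_natAdd]
  omega

theorem prependTopTwo_inv_apply_of_le (j : ℕ) (hj : k ≤ j) (h : j < k + 2) :
    ((prependTopTwo v)⁻¹ ⟨j, h⟩).val = j - k := by
  have : (⟨j, h⟩ : Fin (k + 2)) = Fin.natAdd k ⟨j - k, by omega⟩ := Fin.ext (by simp; omega)
  rw [this]
  simp only [prependTopTwo, Perm.inv_def, symm_trans_apply, finSumFinEquiv_symm_apply_natAdd,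
    symm_symm, sumCongr_symm, sumCongr_apply, Sum.map_inr, sumComm_symm, sumComm_apply,
    Sum.swap_inr, finSumFinEquiv_apply_left, finCongr_symm, finCongr_apply, Fin.val_cast,
    Fin.val_castAdd, refl_symm, refl_apply]

theorem prependTopTwo_injective : Function.Injective (prependTopTwo (k := k)) := by
  intro v w hvw
  ext i
  simpa only [prependTopTwo_apply_add_two] using
    congrArg (fun u : Perm (Fin (k + 2)) => (u ⟨i + 2, by omega⟩).val) hvw

theorem isUpDownAlt_prependTopTwo_iff : IsUpDownAlt (prependTopTwo v) ↔ IsUpDownAlt v := by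
  simp only [IsUpDownAlt, Fin.lt_def]
  constructor
  · intro hu i hi
    have e₀ := prependTopTwo_apply_add_two v i (by omega)
    have e₁ : (prependTopTwo v ⟨i + 2 + 1, by omega⟩).val = (v ⟨i + 1, hi⟩).val :=
      prependTopTwo_apply_add_two v (i + 1) (by omega)
    simpa only [e₀, e₁, Nat.add_mod_right] using hu (i + 2) (by omega)
  · intro hv i hi
    match i with
    | 0 =>
      have e₀ := prependTopTwo_apply_of_lt_two v 0 (by omega)
      have e₁ := prependTopTwo_apply_of_lt_two v 1 (by omega)
      rw [e₀, e₁]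
      omega
    | 1 =>
      have e₁ := prependTopTwo_apply_of_lt_two v 1 (by omega)
      have e₂ := prependTopTwo_apply_add_two v 0 hi
      have := (v ⟨0, by omega⟩).isLt
      rw [e₁, e₂]
      omega
    | i + 2 =>
      have e₀ := prependTopTwo_apply_add_two v i (by omega)
      have e₁ : (prependTopTwo v ⟨i + 2 + 1, hi⟩).val = (v ⟨i + 1, by omega⟩).val :=
        prependTopTwo_apply_add_two v (i + 1) (by omega)
      simpa only [e₀, e₁, Nat.add_mod_right] using hv i (by omega)

theorem exists_prependTopTwo_eq {u : Perm (Fin (k + 2))} (h0 : (u ⟨0, by omega⟩).val = k)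
    (h1 : (u ⟨1, by omega⟩).val = k + 1) : ∃ v, prependTopTwo v = u := by
  have hlt (i : Fin k) : (u ⟨i + 2, by omega⟩).val < k := by
    by_contra hge
    have := (u ⟨i + 2, by omega⟩).isLt
    obtain h | h :
        u ⟨i + 2, by omega⟩ = u ⟨0, by omega⟩ ∨ u ⟨i + 2, by omega⟩ = u ⟨1, by omega⟩ := by
      simp only [Fin.ext_iff]
      omega
    all_goals simpa [Fin.ext_iff] using u.injective h
  let f (i : Fin k) : Fin k := ⟨_, hlt i⟩
  have hf : f.Injective := fun i j hij => by
    have h := congrArg Fin.val hij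
    simpa [Fin.ext_iff] using u.injective (Fin.ext h)
  refine ⟨ofBijective f hf.bijective_of_finite, Equiv.ext fun ⟨x, hx⟩ => Fin.ext ?_⟩
  match x with
  | 0 => rw [prependTopTwo_apply_of_lt_two _ 0 (by omega), h0, Nat.add_zero]
  | 1 => rw [prependTopTwo_apply_of_lt_two _ 1 (by omega), h1]
  | i + 2 => rw [prependTopTwo_apply_add_two]; rfl

end prependTopTwo

theorem bigRetSet_prependTopTwo {m : ℕ} (v : Perm (Fin (m + 1))) :
    bigRetSet (prependTopTwo v) = insert m (bigRetSet v) := by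
  ext j
  rw [Set.mem_insert_iff]
  rcases lt_trichotomy j m with hj | rfl | hj
  · rw [mem_bigRetSet_iff (by omega), mem_bigRetSet_iff (by omega),
      prependTopTwo_inv_apply_of_lt v _ (by omega), prependTopTwo_inv_apply_of_lt v _ (by omega)]
    omega
  · rw [mem_bigRetSet_iff (by omega), prependTopTwo_inv_apply_of_le v _ le_rfl,
      prependTopTwo_inv_apply_of_lt v _ (by omega)]
    simp
  · have hv : j ∉ bigRetSet v := fun h => by have := lt_of_mem_bigRetSet h; omega
    by_cases hjm : j = m + 1
    · subst hjm
      rw [mem_bigRetSet_iff (by omega), prependTopTwo_inv_apply_of_le v _ (by omega),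
        prependTopTwo_inv_apply_of_le v _ le_rfl]
      simp [hv]
    · have hu : j ∉ bigRetSet (prependTopTwo v) := fun h => by
        have := lt_of_mem_bigRetSet h; omega
      simp [hu, hv, hj.ne']

theorem ncard_bigRetSet_prependTopTwo {m : ℕ} (v : Perm (Fin (m + 1))) :
    (bigRetSet (prependTopTwo v)).ncard = 1 + (bigRetSet v).ncard := by
  have hm : m ∉ bigRetSet v := fun h => by have := lt_of_mem_bigRetSet h; omega
  rw [bigRetSet_prependTopTwo, Set.ncard_insert_of_notMem hm (bigRetSet_finite v), add_comm]

theorem IsUpDownAlt.val_apply_one {k : ℕ} {u : Perm (Fin (k + 2))} (hu : IsUpDownAlt u)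
    (h0 : (u ⟨0, by omega⟩).val = k) : (u ⟨1, by omega⟩).val = k + 1 := by
  have h01 : (u ⟨0, by omega⟩).val < (u ⟨1, by omega⟩).val := (hu 0 (by omega)).1 rfl
  have := (u ⟨1, by omega⟩).isLt
  omega

noncomputable def prependTopTwoEquiv (k : ℕ) :
    {v : Perm (Fin k) // IsUpDownAlt v} ≃
      {u : Perm (Fin (k + 2)) // IsUpDownAlt u ∧ (u ⟨0, by omega⟩).val = k} :=
  ofBijective
    (fun v => ⟨prependTopTwo v.1, (isUpDownAlt_prependTopTwo_iff v.1).2 v.2,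
      prependTopTwo_apply_of_lt_two v.1 0 (by omega)⟩)
    ⟨fun _ _ h => Subtype.ext (prependTopTwo_injective (congrArg Subtype.val h)), by
      rintro ⟨u, hu, h0⟩
      obtain ⟨v, rfl⟩ := exists_prependTopTwo_eq h0 (hu.val_apply_one h0)
      exact ⟨⟨v, (isUpDownAlt_prependTopTwo_iff v).1 hu⟩, rfl⟩⟩

/-- Values are 0-indexed: `u(1) = n` reads `(u 0).val = n - 1` and `u(2) = n + 1` reads
`(u 1).val = n`. -/
theorem updown_first_n_bijection (n : ℕ) (hn : 2 ≤ n) :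
    ∃ Φ : {v : Equiv.Perm (Fin (n - 1)) // IsUpDownAlt v} ≃
          {u : Equiv.Perm (Fin (n + 1)) //
            IsUpDownAlt u ∧ ((u : Equiv.Perm (Fin (n + 1))) ⟨0, n.succ_pos⟩).val = n - 1},
      ∀ v,
        ((Φ v : Equiv.Perm (Fin (n + 1))) ⟨0, n.succ_pos⟩).val = n - 1 ∧
        ((Φ v : Equiv.Perm (Fin (n + 1))) ⟨1, by omega⟩).val = n ∧
        (∀ i : Fin (n - 1),
          ((Φ v : Equiv.Perm (Fin (n + 1)))
              ⟨i.val + 2, by have := i.isLt; omega⟩).val =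
            ((v : Equiv.Perm (Fin (n - 1))) i).val) ∧
        (bigRetSet (Φ v : Equiv.Perm (Fin (n + 1)))).ncard =
          1 + (bigRetSet (v : Equiv.Perm (Fin (n - 1)))).ncard := by
  obtain ⟨m, rfl⟩ : ∃ m, n = m + 2 := ⟨n - 2, by omega⟩
  refine ⟨prependTopTwoEquiv (m + 1), fun v => ⟨?_, ?_, fun i => ?_, ?_⟩⟩
  · exact prependTopTwo_apply_of_lt_two v.1 0 (by omega)
  · exact prependTopTwo_apply_of_lt_two v.1 1 (by omega)
  · exact prependTopTwo_apply_add_two v.1 i (by omega)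
  · exact ncard_bigRetSet_prependTopTwo v.1
end
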